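/- arXiv:2202.11788 — 4 statements merged into one kernel-verified Lean document; each statement's English description precedes it below -/
import Mathlib

section
/- Let d ≥ 2, p : [n_1]×⋯×[n_d] → ℝ, and suppose for each k = 1,…,d−1 the rank of the k-th unfolding matrix of p is r_k. Let right sketch functions T_{k+1} : [n_{k+1}]×⋯×[n_d]×[ℓ_k] → ℝ (with ℓ_k ≥ r_k) and left sketch blocks s_1 : [m_1]×[n_1] → ℝ, s_k : [m_k]×[n_k]×[m_{k−1}] → ℝ (2 ≤ k ≤ d−1) be given. Define: Φ̄_k((x_1,…,x_k),γ_k) = Σ_{x_{k+1},…,x_d} p(x_1,…,x_d) T_{k+1}((x_{k+1},…,x_d),γ_k); S_1 = s_1 and S_k(β_k,(x_1,…,x_k)) = Σ_{β_{k−1}} s_k(β_k,x_k,β_{k−1}) S_{k−1}(β_{k−1},(x_1,…,x_{k−1})); Φ̃_1 = Φ̄_1, and for 2 ≤ k ≤ d−1, Φ̃_k(β_{k−1},x_k,γ_k) = Σ_{x_1,…,x_{k−1}} S_{k−1}(β_{k−1},(x_1,…,x_{k−1})) Φ̄_k((x_1,…,x_k),γ_k), and Φ̃_d(β_{d−1},x_d)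 = Σ_{x_1,…,x_{d−1}} S_{d−1}(β_{d−1},(x_1,…,x_{d−1})) p(x_1,…,x_d). Let B_1 : [n_1]×[r_1] → ℝ have orthonormal columns spanning the column space of Φ̃_1(x_1;γ_1), for 2 ≤ k ≤ d−1 let B_k : [m_{k−1}]×[n_k]×[r_k] → ℝ have orthonormal columns (as a matrix with rows indexed by (β_{k−1},x_k) and columns by α_k) spanning the column space of the matrix Φ̃_k((β_{k−1},x_k);γ_k), and let B_d = Φ̃_d. Define A_1(β_1,α_1) = Σ_{x_1} s_1(β_1,x_1) B_1(x_1,α_1) and, for 2 ≤ k ≤ d−1, A_k(β_k,α_k) = Σ_{x_k}Σ_{β_{k−1}} s_k(β_k,x_k,β_{k−1}) B_k(β_{k−1},x_k,α_k). Assume: (i) for k = 1,…,d−1 the matrices Φ̄_k((x_1,…,x_k);γ_k) and the k-th unfolding matrix p((x_1,…,x_k);(x_{k+1},…,x_d)) have the same column space; (ii) for k = 2,…,d−1 the matrices Φ̃_k((β_{k−1},x_k);γ_k) and Φ̄_k((x_1,…,x_k);γ_k) have the same row space; (iii) for k = 1,…,d−1 the matrix A_k(β_k;α_k) has rank r_k.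 Then each of the equations G_1 = B_1; Σ_{α_{k−1}} A_{k−1}(β_{k−1},α_{k−1}) G_k(α_{k−1},x_k,α_k) = B_k(β_{k−1},x_k,α_k) for k = 2,…,d−1; and Σ_{α_{d−1}} A_{d−1}(β_{d−1},α_{d−1}) G_d(α_{d−1},x_d) = B_d(β_{d−1},x_d), has a unique solution, and the solutions G_1,…,G_d are cores of a tensor train representation of p of rank (r_1,…,r_{d−1}). -/
open scoped BigOperators
open Matrix

/-- Indices `(x_0, …, x_{k-1})` of the first `k` variables (sizes given by `n`). -/
abbrev PreIdx (n : ℕ → ℕ) (k : ℕ) := ∀ i : Fin k, Fin (n i)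

/-- Indices `(x_k, …, x_{d-1})` of the variables with position `≥ k`. -/
abbrev SufIdx (n : ℕ → ℕ) (d k : ℕ) := ∀ i : {i : Fin d // k ≤ (i : ℕ)}, Fin (n i)

/-- Indices of the variables with position in the window `[a, b)`. -/
abbrev MidIdx (n : ℕ → ℕ) (d a b : ℕ) :=
  ∀ i : {i : Fin d // a ≤ (i : ℕ) ∧ (i : ℕ) < b}, Fin (n i)

/-- Glue a prefix index and a suffix index into a full index. -/
def glue {n : ℕ → ℕ} {d k : ℕ} (x : PreIdx n k) (y : SufIdx n d k) : PreIdx n d :=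
  fun i => if h : (i : ℕ) < k then x ⟨i, h⟩ else y ⟨i, Nat.le_of_not_lt h⟩

/-- The `k`-th unfolding matrix of a `d`-dimensional tensor `p`. -/
def unfold {n : ℕ → ℕ} {d : ℕ} (p : PreIdx n d → ℝ) (k : ℕ) :
    Matrix (PreIdx n k) (SufIdx n d k) ℝ :=
  Matrix.of fun x y => p (glue x y)

/-- Column space of a matrix: span of its columns. -/
noncomputable def colSpace {R C : Type*} (M : Matrix R C ℝ) : Submodule ℝ (R → ℝ) :=
  Submodule.span ℝ (Set.range fun c => fun r => M r c)

/-- Row space of a matrix: span of its rows. -/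
noncomputable def rowSpace {R C : Type*} (M : Matrix R C ℝ) : Submodule ℝ (C → ℝ) :=
  Submodule.span ℝ (Set.range fun r => fun c => M r c)

/-- Rank of a matrix (dimension of its column space). -/
noncomputable def mrank {R C : Type*} (M : Matrix R C ℝ) : ℕ :=
  Module.finrank ℝ ↥(colSpace M)

/-- Restriction of a prefix index to the first `k` variables. -/
def takePre {n : ℕ → ℕ} {k : ℕ} (x : PreIdx n (k + 1)) : PreIdx n k :=
  fun i => x ⟨i, Nat.lt_succ_of_lt i.isLt⟩

/-- Extend a prefix index by one more variable. -/
def snoc' {n : ℕ → ℕ} {k : ℕ} (z : PreIdx n k) (a : Fin (n k)) : PreIdx n (k + 1) :=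
  fun i =>
    if h : (i : ℕ) < k then z ⟨i, h⟩
    else Fin.cast (congrArg n (by have := i.isLt; omega : k = (i : ℕ))) a

/-- A family of tensor-train cores: core `k` has shape `r k × n k × r (k+1)`.
(The first and last cores carry a dummy index of size `r 0 = 1`, `r d = 1`.) -/
abbrev CoreType (n r : ℕ → ℕ) (d : ℕ) :=
  ∀ k : Fin d, Fin (r k) → Fin (n k) → Fin (r ((k : ℕ) + 1)) → ℝ

/-- Partial contraction of the first `k` cores. -/
noncomputable def ttPrefixF {d : ℕ} {n r : ℕ → ℕ} (G : CoreType n r d) :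
    (k : ℕ) → k ≤ d → PreIdx n k → Fin (r 0) → Fin (r k) → ℝ
  | 0, _, _, a, b => if (a : ℕ) = (b : ℕ) then 1 else 0
  | k + 1, h, x, a, b =>
      ∑ c : Fin (r k),
        ttPrefixF G k (Nat.le_of_succ_le h) (takePre x) a c * G ⟨k, h⟩ c (x (Fin.last k)) b

/-- Full contraction `G_1 ∘ ⋯ ∘ G_d` of a family of tensor-train cores. -/
noncomputable def ttContract {d : ℕ} {n r : ℕ → ℕ} (G : CoreType n r d)
    (x : PreIdx n d) : ℝ :=
  ∑ a : Fin (r 0), ∑ b : Fin (r d), ttPrefixF G d le_rfl x a b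

/-- The recursively contracted left sketch functions `S_k` built from blocks `s_k`. -/
noncomputable def leftSketch {n m : ℕ → ℕ}
    (s : ∀ k : ℕ, Fin (m (k + 1)) → Fin (n k) → Fin (m k) → ℝ) :
    (k : ℕ) → Fin (m k) → PreIdx n k → ℝ
  | 0, _, _ => 1
  | k + 1, β, x => ∑ c : Fin (m k), s k β (x (Fin.last k)) c * leftSketch s k c (takePre x)

/-- The right-sketched unfolding `Φ̄_k = p ∘ T_{k+1}`. -/
noncomputable def rightSketched {n : ℕ → ℕ} {d : ℕ} (p : PreIdx n d → ℝ)
    {ℓ : ℕ → ℕ} (T : ∀ k : ℕ, SufIdx n d k → Fin (ℓ k) → ℝ) (k : ℕ)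
    (x : PreIdx n k) (γ : Fin (ℓ k)) : ℝ :=
  ∑ y : SufIdx n d k, p (glue x y) * T k y γ

/-- The doubly sketched tensor `Φ̃_{j+1} = S_j ∘ Φ̄_{j+1}`. -/
noncomputable def tildePhi {n : ℕ → ℕ} {d : ℕ} {ℓ m : ℕ → ℕ} (p : PreIdx n d → ℝ)
    (T : ∀ k : ℕ, SufIdx n d k → Fin (ℓ k) → ℝ)
    (s : ∀ k : ℕ, Fin (m (k + 1)) → Fin (n k) → Fin (m k) → ℝ)
    (j : ℕ) (β : Fin (m j)) (xj : Fin (n j)) (γ : Fin (ℓ (j + 1))) : ℝ :=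
  ∑ z : PreIdx n j, leftSketch s j β z * rightSketched p T (j + 1) (snoc' z xj) γ

/-- Marginal of `p` on the window of variables `[a, b)`. -/
noncomputable def winMarg {n : ℕ → ℕ} {d : ℕ} (p : PreIdx n d → ℝ) (a b : ℕ)
    (y : MidIdx n d a b) : ℝ :=
  ∑ z : ∀ i : {i : Fin d // (i : ℕ) < a ∨ b ≤ (i : ℕ)}, Fin (n i),
    p fun i =>
      if h : a ≤ (i : ℕ) ∧ (i : ℕ) < b then y ⟨i, h⟩ else z ⟨i, by omega⟩

/-- Marginal of `p` on the window `[a, b)`, viewed as a matrix with rows indexed by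
variables in `[a, c)` and columns by variables in `[c, b)`. -/
noncomputable def winMatrix {n : ℕ → ℕ} {d : ℕ} (p : PreIdx n d → ℝ) (a c b : ℕ) :
    Matrix (MidIdx n d a c) (MidIdx n d c b) ℝ :=
  Matrix.of fun x y =>
    ∑ z : ∀ i : {i : Fin d // (i : ℕ) < a ∨ b ≤ (i : ℕ)}, Fin (n i),
      p fun i =>
        if h1 : a ≤ (i : ℕ) ∧ (i : ℕ) < c then x ⟨i, h1⟩
        else if h2 : c ≤ (i : ℕ) ∧ (i : ℕ) < b then y ⟨i, h2⟩
        else z ⟨i, by omega⟩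

/-- A (first-order) discrete Markov model: a probability density such that for all
`2 ≤ k ≤ d - 1` (1-based), `p(x) · p_k(x_k) = p_{1:k}(x_{1:k}) · p_{k:d}(x_{k:d})`. -/
def IsMarkov {n : ℕ → ℕ} {d : ℕ} (p : PreIdx n d → ℝ) : Prop :=
  (∀ x, 0 ≤ p x) ∧ (∑ x : PreIdx n d, p x) = 1 ∧
    ∀ k : ℕ, 2 ≤ k → k ≤ d - 1 → ∀ x : PreIdx n d,
      p x * winMarg p (k - 1) k (fun i => x i.1) =
        winMarg p 0 k (fun i => x i.1) * winMarg p (k - 1) d (fun i => x i.1)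

/-- An order-`m` discrete Markov model. -/
def IsMarkovOrder {n : ℕ → ℕ} {d : ℕ} (m : ℕ) (p : PreIdx n d → ℝ) : Prop :=
  (∀ x, 0 ≤ p x) ∧ (∑ x : PreIdx n d, p x) = 1 ∧
    ∀ k : ℕ, m + 1 ≤ k → k ≤ d - 1 → ∀ x : PreIdx n d,
      p x * winMarg p (k - m) k (fun i => x i.1) =
        winMarg p 0 k (fun i => x i.1) * winMarg p (k - m) d (fun i => x i.1)

/-- Spectral norm (ℓ² → ℓ² operator norm) of a matrix. -/
noncomputable def specNorm {R C : Type*} [Fintype R] [Fintype C] [DecidableEq C]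
    (M : Matrix R C ℝ) : ℝ :=
  ‖LinearMap.toContinuousLinearMap (Matrix.toEuclideanLin M)‖

/-- Moore–Penrose pseudoinverse of a full-column-rank matrix, `A⁺ = (AᵀA)⁻¹Aᵀ`. -/
noncomputable def pinv {m n : ℕ} (A : Matrix (Fin m) (Fin n) ℝ) :
    Matrix (Fin n) (Fin m) ℝ :=
  (Aᵀ * A)⁻¹ * Aᵀ

/-- The norm `|||G|||`: max over the middle index of the spectral norm of the slices. -/
noncomputable def tnorm {a b c : ℕ} (G : Fin a → Fin b → Fin c → ℝ) : ℝ :=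
  ⨆ i : Fin b, specNorm (Matrix.of fun x y => G x i y)

/-- Supremum norm of a 3-tensor. -/
noncomputable def supNorm3 {a b c : ℕ} (G : Fin a → Fin b → Fin c → ℝ) : ℝ :=
  ⨆ q : Fin a × Fin b × Fin c, |G q.1 q.2.1 q.2.2|

/-- Supremum norm of a `d`-dimensional tensor. -/
noncomputable def supNormF {n : ℕ → ℕ} {d : ℕ} (f : PreIdx n d → ℝ) : ℝ :=
  ⨆ x : PreIdx n d, |f x|

/-- The reduced equations of the TT-RS algorithm (here `d = d₀ + 2`):
`G_1 = B_1`, `A_{k-1} ∘ G_k = B_k` for `k = 2, …, d-1`, and `A_{d-1} G_d = B_d`. -/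
def TTRSEqs (d₀ : ℕ) (n r m : ℕ → ℕ)
    (B : ∀ j : ℕ, Fin (m j) → Fin (n j) → Fin (r (j + 1)) → ℝ)
    (Bd : Fin (m (d₀ + 1)) → Fin (n (d₀ + 1)) → ℝ)
    (A : ∀ j : ℕ, Fin (m (j + 1)) → Fin (r (j + 1)) → ℝ)
    (G : CoreType n r (d₀ + 2)) : Prop :=
  (∀ (a : Fin (r 0)) (c : Fin (m 0)) (x : Fin (n 0)) (α : Fin (r 1)),
      G ⟨0, by omega⟩ a x α = B 0 c x α) ∧
  (∀ j : ℕ, ∀ _hj : j + 1 ≤ d₀,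
      ∀ (β : Fin (m (j + 1))) (x : Fin (n (j + 1))) (α : Fin (r (j + 2))),
      (∑ c : Fin (r (j + 1)), A j β c * G ⟨j + 1, by omega⟩ c x α) = B (j + 1) β x α) ∧
  (∀ (β : Fin (m (d₀ + 1))) (x : Fin (n (d₀ + 1))) (b : Fin (r (d₀ + 2))),
      (∑ c : Fin (r (d₀ + 1)), A d₀ β c * G ⟨d₀ + 1, by omega⟩ c x b) = Bd β x)

/-!
Pick `R_k` with `Φ̃_k R_k = B_k` (possible since `B_k` spans the columns of `Φ̃_k`) and set
`Ψ_k = Φ̄_k R_k`. Then `S_{k-1} Ψ_k = B_k`, hence `A_k = S_k Ψ_k`, and `Ψ_k` spans the column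
space of `Φ̄_k`, which by (i) is that of the `k`-th unfolding: by (ii) `Φ̄_k = Q Φ̃_k` for some `Q`,
and `Φ̃_k = B_k t = Φ̃_k R_k t`, so `Φ̄_k = Φ̄_k R_k t = Ψ_k t`. The slices `Ψ_{k+1}(·, x_{k+1}, ·)`
have their columns in the column space of the `k`-th unfolding, i.e. of `Ψ_k`, so there are cores
with `Ψ_k G_{k+1}(·, x_{k+1}, ·) = Ψ_{k+1}(·, x_{k+1}, ·)` (with `Ψ_d = p`); these telescope to
`p`, and sketching them by `S_k` gives `A_k G_{k+1} = B_{k+1}`. By (iii) every `A_k` is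
injective, so the solution is unique.
-/

section ColSpace

variable {R R' C C' : Type*}

theorem mem_colSpace_iff [Fintype C] {M : Matrix R C ℝ} {v : R → ℝ} :
    v ∈ colSpace M ↔ ∃ w, M *ᵥ w = v := by
  rw [show colSpace M = LinearMap.range M.mulVecLin from (range_mulVecLin M).symm]
  rfl

theorem colSpace_le_iff_exists_mul_eq [Fintype C] {M : Matrix R C ℝ} {N : Matrix R C' ℝ} :
    colSpace N ≤ colSpace M ↔ ∃ W : Matrix C C' ℝ, M * W = N := by
  constructor
  · intro h
    have hcol : ∀ c', ∃ w, M *ᵥ w = fun r => N r c' :=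
      fun c' => mem_colSpace_iff.1 (h (Submodule.subset_span ⟨c', rfl⟩))
    choose w hw using hcol
    exact ⟨of fun c c' => w c' c, by ext r c'; exact congrFun (hw c') r⟩
  · rintro ⟨W, rfl⟩
    refine Submodule.span_le.2 ?_
    rintro _ ⟨c', rfl⟩
    exact mem_colSpace_iff.2 ⟨fun c => W c c', rfl⟩

theorem exists_mul_eq_of_rowSpace_le [Fintype R] {M : Matrix R C ℝ} {N : Matrix R' C ℝ}
    (h : rowSpace N ≤ rowSpace M) : ∃ Q : Matrix R' R ℝ, Q * M = N := by
  obtain ⟨W, hW⟩ := colSpace_le_iff_exists_mul_eq.1 (show colSpace Nᵀ ≤ colSpace Mᵀ from h)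
  exact ⟨Wᵀ, by rw [← transpose_transpose N, ← hW, transpose_mul, transpose_transpose]⟩

theorem colSpace_submatrix_id_le (M : Matrix R C ℝ) (g : C' → C) :
    colSpace (M.submatrix id g) ≤ colSpace M :=
  Submodule.span_mono <| by rintro _ ⟨c, rfl⟩; exact ⟨g c, rfl⟩

theorem colSpace_submatrix_id_mono [Fintype C] {M : Matrix R C ℝ} {N : Matrix R C' ℝ}
    (h : colSpace N ≤ colSpace M) (f : R' → R) :
    colSpace (N.submatrix f id) ≤ colSpace (M.submatrix f id) := by
  obtain ⟨W, rfl⟩ := colSpace_le_iff_exists_mul_eq.1 h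
  exact colSpace_le_iff_exists_mul_eq.2 ⟨W, rfl⟩

theorem colSpace_of_const_one [Unique R] [Fintype C] [Nonempty C] :
    colSpace (of fun (_ : R) (_ : C) => (1 : ℝ)) = ⊤ := by
  classical
  refine eq_top_iff.2 fun v _ => mem_colSpace_iff.2 ?_
  obtain ⟨c⟩ := ‹Nonempty C›
  refine ⟨Pi.single c (v default), funext fun r => ?_⟩
  simp [mulVec, Unique.eq_default r]

theorem mulVec_injective_of_mrank_eq_card [Fintype C] {M : Matrix R C ℝ}
    (h : mrank M = Fintype.card C) : Function.Injective M.mulVec :=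
  mulVec_injective_iff.2 (linearIndependent_iff_card_eq_finrank_span.2 h.symm)

/-- The witness is `Ψ = Φ * R` for any `R` with `S * Φ * R = B`. -/
theorem exists_mul_eq_and_colSpace_eq_of_rowSpace_le {M U Γ α : Type*} [Fintype M]
    [Fintype U] [Fintype Γ] [Fintype α] {S : Matrix M U ℝ} {Φ : Matrix U Γ ℝ}
    {B : Matrix M α ℝ} (hrow : rowSpace Φ ≤ rowSpace (S * Φ))
    (hB : colSpace B = colSpace (S * Φ)) :
    ∃ Ψ : Matrix U α ℝ, S * Ψ = B ∧ colSpace Ψ = colSpace Φ := by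
  obtain ⟨R, hR⟩ := colSpace_le_iff_exists_mul_eq.1 hB.le
  obtain ⟨t, ht⟩ := colSpace_le_iff_exists_mul_eq.1 hB.ge
  obtain ⟨Q, hQ⟩ := exists_mul_eq_of_rowSpace_le hrow
  refine ⟨Φ * R, by rw [← Matrix.mul_assoc, hR], le_antisymm
    (colSpace_le_iff_exists_mul_eq.2 ⟨R, rfl⟩) (colSpace_le_iff_exists_mul_eq.2 ⟨t, ?_⟩)⟩
  calc Φ * R * t = Q * (S * Φ) * R * t := by rw [hQ]
    _ = Q * (S * Φ * R * t) := by simp only [Matrix.mul_assoc]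
    _ = Φ := by rw [hR, ht, hQ]

end ColSpace

section Index

variable {n : ℕ → ℕ}

@[simp] theorem takePre_snoc' {k : ℕ} (z : PreIdx n k) (a : Fin (n k)) :
    takePre (snoc' z a) = z := by
  funext i
  simp [takePre, snoc', i.isLt]

@[simp] theorem snoc'_last {k : ℕ} (z : PreIdx n k) (a : Fin (n k)) :
    snoc' z a (Fin.last k) = a := by
  simp [snoc', Fin.last]

@[simp] theorem snoc'_takePre {k : ℕ} (x : PreIdx n (k + 1)) :
    snoc' (takePre x) (x (Fin.last k)) = x := by
  funext i
  by_cases h : (i : ℕ) < k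
  · simp [snoc', takePre, h]
  · obtain rfl : i = Fin.last k := Fin.ext (by simp [Fin.last]; omega)
    simp

def snocEquiv (n : ℕ → ℕ) (k : ℕ) : PreIdx n k × Fin (n k) ≃ PreIdx n (k + 1) where
  toFun q := snoc' q.1 q.2
  invFun w := (takePre w, w (Fin.last k))
  left_inv q := by simp
  right_inv w := by simp

theorem sum_preIdx_succ {k : ℕ} (f : PreIdx n (k + 1) → ℝ) :
    ∑ w, f w = ∑ z : PreIdx n k, ∑ a, f (snoc' z a) := by
  rw [← Fintype.sum_prod_type']
  exact (Fintype.sum_equiv (snocEquiv n k) _ _ fun _ => rfl).symm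

def consSuf {d k : ℕ} (a : Fin (n k)) (y : SufIdx n d (k + 1)) : SufIdx n d k :=
  fun i => if h : k + 1 ≤ (i.1 : ℕ) then y ⟨i.1, h⟩
    else Fin.cast (congrArg n (by have := i.2; omega : k = ((i.1 : Fin d) : ℕ))) a

theorem glue_snoc' {d k : ℕ} (w : PreIdx n k) (a : Fin (n k)) (y : SufIdx n d (k + 1)) :
    glue (snoc' w a) y = glue w (consSuf a y) := by
  funext i
  by_cases h1 : (i : ℕ) < k
  · simp [glue, snoc', h1, Nat.lt_succ_of_lt h1]
  · by_cases h2 : (i : ℕ) < k + 1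
    · simp [glue, snoc', consSuf, h1, h2, show ¬ k + 1 ≤ (i : ℕ) by omega]
    · simp [glue, consSuf, h1, h2, show k + 1 ≤ (i : ℕ) by omega]

theorem unfold_succ_submatrix_snoc' {d : ℕ} (p : PreIdx n d → ℝ) (k : ℕ) (a : Fin (n k)) :
    (unfold p (k + 1)).submatrix (snoc' · a) id = (unfold p k).submatrix id (consSuf a) := by
  ext w y
  simp [unfold, glue_snoc']

theorem colSpace_const_le_colSpace_unfold {d : ℕ} {ι : Type*} (p : PreIdx n d → ℝ) :
    colSpace (of fun (x : PreIdx n d) (_ : ι) => p x) ≤ colSpace (unfold p d) := by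
  refine Submodule.span_le.2 ?_
  rintro _ ⟨-, rfl⟩
  refine Submodule.subset_span ⟨fun i => absurd i.2 (not_le.2 i.1.isLt), funext fun x => ?_⟩
  show p (glue x _) = p x
  congr 1
  funext i
  simp [glue, i.isLt]

theorem colSpace_submatrix_snoc'_le {d k : ℕ} {ι κ : Type*} [Fintype ι] {p : PreIdx n d → ℝ}
    {Φ : Matrix (PreIdx n k) κ ℝ} {Φ' : Matrix (PreIdx n (k + 1)) ι ℝ}
    (h' : colSpace Φ' ≤ colSpace (unfold p (k + 1))) (h : colSpace (unfold p k) ≤ colSpace Φ)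
    (a : Fin (n k)) : colSpace (Φ'.submatrix (snoc' · a) id) ≤ colSpace Φ :=
  calc colSpace (Φ'.submatrix (snoc' · a) id)
      _ ≤ colSpace ((unfold p (k + 1)).submatrix (snoc' · a) id) :=
        colSpace_submatrix_id_mono h' _
      _ = colSpace ((unfold p k).submatrix id (consSuf a)) := by
        rw [unfold_succ_submatrix_snoc']
      _ ≤ colSpace Φ := (colSpace_submatrix_id_le _ _).trans h

end Index

section Frames

variable {n r : ℕ → ℕ} {d : ℕ}

def IsLeftFrames (G : CoreType n r d) (Φ : ∀ k, Matrix (PreIdx n k) (Fin (r k)) ℝ) : Prop :=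
  ∀ (k : Fin d) (a : Fin (n k)),
    Φ k * of (fun b c => G k b a c) = (Φ ((k : ℕ) + 1)).submatrix (snoc' · a) id

theorem IsLeftFrames.sum_mul_ttPrefixF {G : CoreType n r d}
    {Φ : ∀ k, Matrix (PreIdx n k) (Fin (r k)) ℝ} (hG : IsLeftFrames G Φ) :
    ∀ (k : ℕ) (hk : k ≤ d) (x : PreIdx n k) (b : Fin (r k)),
      ∑ a, Φ 0 default a * ttPrefixF G k hk x a b = Φ k x b
  | 0, _, x, b => by
    rw [Subsingleton.elim x default]
    simp [ttPrefixF, Fin.val_inj]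
  | k + 1, hk, x, b => by
    have hstep := congrFun₂ (hG ⟨k, hk⟩ (x (Fin.last k))) (takePre x) b
    simp only [mul_apply, of_apply, submatrix_apply, id, snoc'_takePre] at hstep
    simp only [ttPrefixF, Finset.mul_sum, ← mul_assoc]
    rw [Finset.sum_comm]
    simp only [← Finset.sum_mul, hG.sum_mul_ttPrefixF k]
    exact hstep

theorem exists_isLeftFrames (Φ : ∀ k, Matrix (PreIdx n k) (Fin (r k)) ℝ)
    (h : ∀ k < d, ∀ a : Fin (n k),
      colSpace ((Φ (k + 1)).submatrix (snoc' · a) id) ≤ colSpace (Φ k)) :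
    ∃ G : CoreType n r d, IsLeftFrames G Φ := by
  have hcore : ∀ (k : Fin d) (a : Fin (n k)), ∃ W : Matrix (Fin (r k)) (Fin (r (k + 1))) ℝ,
      Φ k * W = (Φ ((k : ℕ) + 1)).submatrix (snoc' · a) id :=
    fun k a => colSpace_le_iff_exists_mul_eq.1 (h k k.isLt a)
  choose W hW using hcore
  exact ⟨fun k b a c => W k a b c, hW⟩

/-- The frames `1, Ψ 0, …, Ψ (d - 2), p`, the first and last with constant columns. -/
def ttFrames (p : PreIdx n d → ℝ) (Ψ : ∀ j, Matrix (PreIdx n (j + 1)) (Fin (r (j + 1))) ℝ) :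
    ∀ k, Matrix (PreIdx n k) (Fin (r k)) ℝ :=
  Function.update (fun | 0 => of fun _ _ => 1 | j + 1 => Ψ j) d (of fun x _ => p x)

variable {p : PreIdx n d → ℝ} {Ψ : ∀ j, Matrix (PreIdx n (j + 1)) (Fin (r (j + 1))) ℝ}

theorem ttFrames_zero (hd : d ≠ 0) : ttFrames p Ψ 0 = of fun _ _ => 1 :=
  Function.update_of_ne hd.symm _ _

theorem ttFrames_succ {j : ℕ} (hj : j + 1 ≠ d) : ttFrames p Ψ (j + 1) = Ψ j :=
  Function.update_of_ne hj _ _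

theorem ttFrames_self : ttFrames p Ψ d = of fun x _ => p x :=
  Function.update_self _ _ _

theorem exists_isLeftFrames_ttFrames [Nonempty (Fin (r 0))]
    (hΨ : ∀ j, j + 1 < d → colSpace (Ψ j) = colSpace (unfold p (j + 1))) :
    ∃ G : CoreType n r d, IsLeftFrames G (ttFrames p Ψ) := by
  refine exists_isLeftFrames _ fun k hk a => colSpace_submatrix_snoc'_le (p := p) ?_ ?_ a
  · rcases (Nat.succ_le_of_lt hk).lt_or_eq with hlt | rfl
    · rw [ttFrames_succ hlt.ne, hΨ k hlt]
    · rw [ttFrames_self]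
      exact colSpace_const_le_colSpace_unfold p
  · rcases k with _ | j
    · rw [ttFrames_zero (by omega), colSpace_of_const_one]
      exact le_top
    · rw [ttFrames_succ hk.ne, hΨ j hk]

theorem IsLeftFrames.ttContract_eq {G : CoreType n r d} (hG : IsLeftFrames G (ttFrames p Ψ))
    (hd : d ≠ 0) (hrd : r d = 1) (x : PreIdx n d) : ttContract G x = p x := by
  have hsum := hG.sum_mul_ttPrefixF d le_rfl x
  simp only [ttFrames_zero hd, ttFrames_self, of_apply, one_mul] at hsum
  rw [ttContract, Finset.sum_comm]
  simp [hsum, hrd]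

end Frames

def leftUnfold {α β γ : Type*} (G : α → β → γ → ℝ) : Matrix (α × β) γ ℝ :=
  of fun q c => G q.1 q.2 c

section Sketch

variable {n m : ℕ → ℕ} (s : ∀ k : ℕ, Fin (m (k + 1)) → Fin (n k) → Fin (m k) → ℝ)

/-- `S_j ⊗ I`: the left sketch `S_j` acting on the first `j` variables, with `x_j` kept. -/
noncomputable def sketchMatrix (j : ℕ) : Matrix (Fin (m j) × Fin (n j)) (PreIdx n (j + 1)) ℝ :=
  of fun q w => if w (Fin.last j) = q.2 then leftSketch s j q.1 (takePre w) else 0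

def sketchBlock (j : ℕ) : Matrix (Fin (m (j + 1))) (Fin (m j) × Fin (n j)) ℝ :=
  of fun β q => s j β q.2 q.1

theorem sketchMatrix_mul_apply {j : ℕ} {ι : Type*} (Φ : Matrix (PreIdx n (j + 1)) ι ℝ)
    (c : Fin (m j)) (a : Fin (n j)) (γ : ι) :
    (sketchMatrix s j * Φ) (c, a) γ = ∑ z, leftSketch s j c z * Φ (snoc' z a) γ := by
  simp [mul_apply, sketchMatrix, sum_preIdx_succ, ite_mul]

theorem sketchMatrix_zero_mul_apply {ι : Type*} (Φ : Matrix (PreIdx n 1) ι ℝ)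
    (c : Fin (m 0)) (a : Fin (n 0)) (γ : ι) :
    (sketchMatrix s 0 * Φ) (c, a) γ = Φ (snoc' default a) γ := by
  simp [sketchMatrix_mul_apply, leftSketch]

theorem rowSpace_le_rowSpace_sketchMatrix_zero_mul [Nonempty (Fin (m 0))] {ι : Type*}
    (Φ : Matrix (PreIdx n 1) ι ℝ) : rowSpace Φ ≤ rowSpace (sketchMatrix s 0 * Φ) := by
  obtain ⟨c⟩ := ‹Nonempty (Fin (m 0))›
  refine Submodule.span_mono ?_
  rintro _ ⟨w, rfl⟩
  refine ⟨(c, w (Fin.last 0)), funext fun γ => ?_⟩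
  show (sketchMatrix s 0 * Φ) (c, w (Fin.last 0)) γ = Φ w γ
  rw [sketchMatrix_zero_mul_apply, Subsingleton.elim default (takePre w), snoc'_takePre]

theorem sketchBlock_mul_sketchMatrix (j : ℕ) :
    sketchBlock s j * sketchMatrix s j = of (leftSketch s (j + 1)) := by
  ext β w
  simp [mul_apply, sketchBlock, sketchMatrix, Fintype.sum_prod_type, leftSketch]

theorem sketchBlock_mul_leftUnfold_apply {j : ℕ} {ι : Type*}
    (B : Fin (m j) → Fin (n j) → ι → ℝ) (β : Fin (m (j + 1))) (γ : ι) :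
    (sketchBlock s j * leftUnfold B) β γ = ∑ a, ∑ c, s j β a c * B c a γ := by
  simp only [sketchBlock, leftUnfold, mul_apply, of_apply, Fintype.sum_prod_type]
  exact Finset.sum_comm

theorem leftSketch_mul_submatrix_snoc' {k : ℕ} {ι : Type*} (Φ : Matrix (PreIdx n (k + 1)) ι ℝ)
    (a : Fin (n k)) (β : Fin (m k)) (γ : ι) :
    (of (leftSketch s k) * Φ.submatrix (snoc' · a) id) β γ =
      (sketchMatrix s k * Φ) (β, a) γ := by
  rw [sketchMatrix_mul_apply]
  rfl

theorem leftUnfold_tildePhi {d : ℕ} {ℓ : ℕ → ℕ} (p : PreIdx n d → ℝ)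
    (T : ∀ k : ℕ, SufIdx n d k → Fin (ℓ k) → ℝ) (j : ℕ) :
    leftUnfold (tildePhi p T s j) = sketchMatrix s j * of (rightSketched p T (j + 1)) := by
  ext ⟨c, a⟩ γ
  rw [sketchMatrix_mul_apply]
  rfl

end Sketch

section Recovery

variable {d₀ : ℕ} {n r m : ℕ → ℕ} {s : ∀ j : ℕ, Fin (m (j + 1)) → Fin (n j) → Fin (m j) → ℝ}
  {B : ∀ j : ℕ, Fin (m j) → Fin (n j) → Fin (r (j + 1)) → ℝ}
  {Bd : Fin (m (d₀ + 1)) → Fin (n (d₀ + 1)) → ℝ}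
  {A : ∀ j : ℕ, Fin (m (j + 1)) → Fin (r (j + 1)) → ℝ}

theorem ttrsEqs_of_isLeftFrames {p : PreIdx n (d₀ + 2) → ℝ}
    {Ψ : ∀ j, Matrix (PreIdx n (j + 1)) (Fin (r (j + 1))) ℝ} {G : CoreType n r (d₀ + 2)}
    (hG : IsLeftFrames G (ttFrames p Ψ)) (hr0 : r 0 = 1)
    (hB : ∀ j ≤ d₀, sketchMatrix s j * Ψ j = leftUnfold (B j))
    (hA : ∀ j ≤ d₀, of (A j) = of (leftSketch s (j + 1)) * Ψ j)
    (hBd : ∀ β a, ∑ z, leftSketch s (d₀ + 1) β z * p (snoc' z a) = Bd β a) :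
    TTRSEqs d₀ n r m B Bd A G := by
  have hnext : ∀ j (hj : j ≤ d₀) β a c, ∑ b, A j β b * G ⟨j + 1, by omega⟩ b a c =
      (sketchMatrix s (j + 1) * ttFrames p Ψ (j + 2)) (β, a) c := by
    intro j hj β a c
    have hstep := hG ⟨j + 1, by omega⟩ a
    rw [ttFrames_succ (j := j) (by omega)] at hstep
    rw [← leftSketch_mul_submatrix_snoc', ← hstep, ← Matrix.mul_assoc, ← hA j hj]
    rfl
  refine ⟨fun b c a α => ?_, fun j hj β a α => ?_, fun β a c => ?_⟩
  · have hfirst := congrFun₂ (hG ⟨0, by omega⟩ a) default α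
    rw [ttFrames_zero (by omega), ttFrames_succ (j := 0) (by omega)] at hfirst
    have hB0 : (sketchMatrix s 0 * Ψ 0) (c, a) α = B 0 c a α := by
      rw [hB 0 (Nat.zero_le _)]
      rfl
    have : Subsingleton (Fin (r 0)) := hr0 ▸ inferInstance
    simp only [mul_apply, of_apply, one_mul, Fintype.sum_subsingleton _ b] at hfirst
    rw [← hB0, sketchMatrix_zero_mul_apply]
    exact hfirst
  · rw [hnext j (by omega), ttFrames_succ (j := j + 1) (by omega), hB (j + 1) hj]
    rfl
  · rw [hnext d₀ le_rfl, ttFrames_self, sketchMatrix_mul_apply]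
    exact hBd β a

theorem TTRSEqs.unique [Nonempty (Fin (m 0))]
    (hA : ∀ j ≤ d₀, Function.Injective (of (A j)).mulVec) {G G' : CoreType n r (d₀ + 2)}
    (hG : TTRSEqs d₀ n r m B Bd A G) (hG' : TTRSEqs d₀ n r m B Bd A G') : G = G' := by
  obtain ⟨c₀⟩ := ‹Nonempty (Fin (m 0))›
  have hcancel : ∀ j ≤ d₀, ∀ hj : j + 1 < d₀ + 2,
      (∀ β a c, ∑ b, A j β b * G ⟨j + 1, hj⟩ b a c = ∑ b, A j β b * G' ⟨j + 1, hj⟩ b a c) →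
        G ⟨j + 1, hj⟩ = G' ⟨j + 1, hj⟩ :=
    fun j hj _ h => funext fun b => funext fun a => funext fun c =>
      congrFun (hA j hj (funext fun β => h β a c)) b
  funext ⟨k, hk⟩
  rcases k with _ | j
  · funext b a c
    rw [hG.1 b c₀ a c, hG'.1 b c₀ a c]
  · rcases (Nat.lt_succ_iff.1 (Nat.succ_lt_succ_iff.1 hk)).lt_or_eq with hj | rfl
    · exact hcancel j hj.le hk fun β a c => by rw [hG.2.1 j hj β a c, hG'.2.1 j hj β a c]
    · exact hcancel j le_rfl hk fun β a c => by rw [hG.2.2 β a c, hG'.2.2 β a c]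

end Recovery

/-- Here `d = d₀ + 2` and indexing is 0-based: `B j`, `tildePhi … j` and `A j` are the paper's
`B_{j+1}`, `Φ̃_{j+1}` and `A_{j+1}`, and `T k` is `T_{k+1}`; the first left sketch block and the
first and last cores carry dummy indices of size `m 0 = 1`, `r 0 = 1`, `r d = 1`. -/
theorem ttrs_exact_recovery_general
    (d₀ : ℕ) (n r ℓ m : ℕ → ℕ)
    (hr0 : r 0 = 1) (hrd : r (d₀ + 2) = 1) (hm0 : m 0 = 1)
    (p : PreIdx n (d₀ + 2) → ℝ)
    (T : ∀ k : ℕ, SufIdx n (d₀ + 2) k → Fin (ℓ k) → ℝ)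
    (s : ∀ j : ℕ, Fin (m (j + 1)) → Fin (n j) → Fin (m j) → ℝ)
    (B : ∀ j : ℕ, Fin (m j) → Fin (n j) → Fin (r (j + 1)) → ℝ)
    (hBspan : ∀ j, j ≤ d₀ →
      colSpace (Matrix.of fun (q : Fin (m j) × Fin (n j)) (α : Fin (r (j + 1))) =>
          B j q.1 q.2 α) =
        colSpace (Matrix.of fun (q : Fin (m j) × Fin (n j)) (γ : Fin (ℓ (j + 1))) =>
          tildePhi p T s j q.1 q.2 γ))
    (Bd : Fin (m (d₀ + 1)) → Fin (n (d₀ + 1)) → ℝ)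
    (hBd : ∀ β xd, Bd β xd =
      ∑ z : PreIdx n (d₀ + 1), leftSketch s (d₀ + 1) β z * p (snoc' z xd))
    (A : ∀ j : ℕ, Fin (m (j + 1)) → Fin (r (j + 1)) → ℝ)
    (hA : ∀ j, j ≤ d₀ → ∀ β α,
      A j β α = ∑ x : Fin (n j), ∑ c : Fin (m j), s j β x c * B j c x α)
    (hi : ∀ k, 1 ≤ k → k ≤ d₀ + 1 →
      colSpace (Matrix.of (rightSketched p T k)) = colSpace (unfold p k))
    (hii : ∀ j, 1 ≤ j → j ≤ d₀ →
      rowSpace (Matrix.of fun (q : Fin (m j) × Fin (n j)) (γ : Fin (ℓ (j + 1))) =>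
          tildePhi p T s j q.1 q.2 γ) =
        rowSpace (Matrix.of (rightSketched p T (j + 1))))
    (hiii : ∀ j, j ≤ d₀ → mrank (Matrix.of (A j)) = r (j + 1)) :
    (∃! G : CoreType n r (d₀ + 2), TTRSEqs d₀ n r m B Bd A G) ∧
      ∀ G : CoreType n r (d₀ + 2), TTRSEqs d₀ n r m B Bd A G →
        ∀ x, p x = ttContract G x := by
  have : Nonempty (Fin (m 0)) := ⟨⟨0, by omega⟩⟩
  have : Nonempty (Fin (r 0)) := ⟨⟨0, by omega⟩⟩
  have hexact : ∀ j ≤ d₀, ∃ Ψ : Matrix (PreIdx n (j + 1)) (Fin (r (j + 1))) ℝ,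
      sketchMatrix s j * Ψ = leftUnfold (B j) ∧ colSpace Ψ = colSpace (unfold p (j + 1)) := by
    intro j hj
    rw [← hi (j + 1) (by omega) (by omega)]
    refine exists_mul_eq_and_colSpace_eq_of_rowSpace_le ?_
      ((hBspan j hj).trans (congrArg colSpace (leftUnfold_tildePhi s p T j)))
    rcases j with _ | j
    · exact rowSpace_le_rowSpace_sketchMatrix_zero_mul s _
    · rw [← leftUnfold_tildePhi]
      exact (hii (j + 1) (by omega) hj).ge
  choose! Ψ hΨB hΨcol using hexact
  have hAΨ : ∀ j ≤ d₀, of (A j) = of (leftSketch s (j + 1)) * Ψ j := fun j hj => by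
    rw [← sketchBlock_mul_sketchMatrix, Matrix.mul_assoc, hΨB j hj]
    ext β α
    rw [sketchBlock_mul_leftUnfold_apply, ← hA j hj β α]
    rfl
  obtain ⟨G, hG⟩ := exists_isLeftFrames_ttFrames (p := p) (Ψ := Ψ) fun j hj => hΨcol j (by omega)
  have hEqs := ttrsEqs_of_isLeftFrames hG hr0 hΨB hAΨ fun β a => (hBd β a).symm
  have hinj : ∀ j ≤ d₀, Function.Injective (of (A j)).mulVec := fun j hj =>
    mulVec_injective_of_mrank_eq_card (by rw [hiii j hj, Fintype.card_fin])
  refine ⟨⟨G, hEqs, fun G' hG' => hG'.unique hinj hEqs⟩, fun G' hG' x => ?_⟩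
  rw [hG'.unique hinj hEqs, hG.ttContract_eq (by omega) hrd]

/-- Theorem: exact recovery for TT-RS.
With right sketches `T` and recursively contracted left sketches built from blocks `s`,
suppose (i) each `Φ̄_k` has the same column space as the `k`-th unfolding matrix,
(ii) each `Φ̃_k` has the same row space as `Φ̄_k`, and (iii) each coefficient matrix
`A_k` has rank `r_k`.  Then the reduced equations have unique solutions, which are
cores of a tensor-train representation of `p` of rank `(r_1, …, r_{d-1})`.
(Here `d = d₀ + 2 ≥ 2`, indexing is 0-based: `B j`, `tildePhi … j` correspond to the
paper's `B_{j+1}`, `Φ̃_{j+1}`, `A j` to the paper's `A_{j+1}`, and `T k` to `T_{k+1}`;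
the first left sketch block and the first/last cores carry dummy indices of size
`m 0 = 1`, `r 0 = 1`, `r d = 1`.) -/
theorem ttrs_exact_recovery
    (d₀ : ℕ) (n r ℓ m : ℕ → ℕ)
    (hr0 : r 0 = 1) (hrd : r (d₀ + 2) = 1) (hm0 : m 0 = 1)
    (p : PreIdx n (d₀ + 2) → ℝ)
    (hrank : ∀ k, 1 ≤ k → k ≤ d₀ + 1 → mrank (unfold p k) = r k)
    (hℓ : ∀ k, 1 ≤ k → k ≤ d₀ + 1 → r k ≤ ℓ k)
    (T : ∀ k : ℕ, SufIdx n (d₀ + 2) k → Fin (ℓ k) → ℝ)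
    (s : ∀ j : ℕ, Fin (m (j + 1)) → Fin (n j) → Fin (m j) → ℝ)
    (B : ∀ j : ℕ, Fin (m j) → Fin (n j) → Fin (r (j + 1)) → ℝ)
    (hBortho : ∀ j, j ≤ d₀ →
      (Matrix.of fun (q : Fin (m j) × Fin (n j)) (α : Fin (r (j + 1))) => B j q.1 q.2 α)ᵀ *
        (Matrix.of fun (q : Fin (m j) × Fin (n j)) (α : Fin (r (j + 1))) => B j q.1 q.2 α) = 1)
    (hBspan : ∀ j, j ≤ d₀ →
      colSpace (Matrix.of fun (q : Fin (m j) × Fin (n j)) (α : Fin (r (j + 1))) =>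
          B j q.1 q.2 α) =
        colSpace (Matrix.of fun (q : Fin (m j) × Fin (n j)) (γ : Fin (ℓ (j + 1))) =>
          tildePhi p T s j q.1 q.2 γ))
    (Bd : Fin (m (d₀ + 1)) → Fin (n (d₀ + 1)) → ℝ)
    (hBd : ∀ β xd, Bd β xd =
      ∑ z : PreIdx n (d₀ + 1), leftSketch s (d₀ + 1) β z * p (snoc' z xd))
    (A : ∀ j : ℕ, Fin (m (j + 1)) → Fin (r (j + 1)) → ℝ)
    (hA : ∀ j, j ≤ d₀ → ∀ β α,
      A j β α = ∑ x : Fin (n j), ∑ c : Fin (m j), s j β x c * B j c x α)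
    (hi : ∀ k, 1 ≤ k → k ≤ d₀ + 1 →
      colSpace (Matrix.of (rightSketched p T k)) = colSpace (unfold p k))
    (hii : ∀ j, 1 ≤ j → j ≤ d₀ →
      rowSpace (Matrix.of fun (q : Fin (m j) × Fin (n j)) (γ : Fin (ℓ (j + 1))) =>
          tildePhi p T s j q.1 q.2 γ) =
        rowSpace (Matrix.of (rightSketched p T (j + 1))))
    (hiii : ∀ j, j ≤ d₀ → mrank (Matrix.of (A j)) = r (j + 1)) :
    (∃! G : CoreType n r (d₀ + 2), TTRSEqs d₀ n r m B Bd A G) ∧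
      ∀ G : CoreType n r (d₀ + 2), TTRSEqs d₀ n r m B Bd A G →
        ∀ x, p x = ttContract G x :=
  ttrs_exact_recovery_general d₀ n r ℓ m hr0 hrd hm0 p T s B hBspan Bd hBd A hA hi hii hiii
end

section
/- In the setting of the TT-RS construction (sketch functions T_{k+1}, s_k, the recursively contracted left sketches S_k, the tensors Φ̄_k, Φ̃_k, and the trimmed tensors B_k as defined there), assume: the rank of the k-th unfolding matrix of p is r_k for each k; (i) for k = 1,…,d−1 the matrices Φ̄_k((x_1,…,x_k);γ_k) and the k-th unfolding matrix of p have the same column space; (ii) for k = 2,…,d−1 the matrices Φ̃_k((β_{k−1},x_k);γ_k) and Φ̄_k((x_1,…,x_k);γ_k) have the same row space. Then: (a) the column space of B_1(x_1;α_1) equals the column space of the first unfolding matrix of p; and (b) for each k = 2,…,d−1 there exists Φ_k : [n_1]×⋯×[n_k]×[r_k] → ℝ such that the column space of the matrix Φ_k((x_1,…,x_k);α_k) equals the column space of the k-th unfolding matrix of p and B_k(β_{k−1},x_k,α_k) = Σ_{x_1,…,x_{k−1}} S_{k−1}(β_{k−1},(x_1,…,x_{k−1})) Φ_k((x_1,…,x_{k−1}),x_k,α_k)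 for all β_{k−1}, x_k, α_k. -/
open scoped BigOperators
open Matrix

/-!
The columns of `B_k` lie in the column space of `Φ̃_k = S_{k-1} ∘ Φ̄_k`, so `B_k = S_{k-1} ∘ Φ_k`
with `Φ_k := Φ̄_k W` for some coefficient matrix `W`. The column space of `Φ_k` lies in that of
`Φ̄_k`, which by (i) is the column space of the unfolding, of dimension `r_k`; conversely its image
under `S_{k-1}` is spanned by the `r_k` orthonormal columns of `B_k`, so it has dimension at least
`r_k` and the two column spaces coincide. For `k = 1` the sketch `S_0` is trivial.
-/

section ColSpace

variable {R C ι : Type*}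

lemma colSpace_eq_range_mulVecLin [Fintype C] (M : Matrix R C ℝ) :
    colSpace M = LinearMap.range M.mulVecLin :=
  (Matrix.range_mulVecLin M).symm

lemma colSpace_of_map_cols {R' : Type*} (L : (R → ℝ) →ₗ[ℝ] (R' → ℝ)) (M : Matrix R C ℝ) :
    colSpace (Matrix.of fun r c => L (fun x => M x c) r) = (colSpace M).map L := by
  rw [colSpace, colSpace, Submodule.map_span, ← Set.range_comp]
  rfl

lemma colSpace_mul_le [Fintype C] [Fintype ι] (A : Matrix R C ℝ) (W : Matrix C ι ℝ) :
    colSpace (A * W) ≤ colSpace A := by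
  rw [colSpace_eq_range_mulVecLin, colSpace_eq_range_mulVecLin, Matrix.mulVecLin_mul]
  exact LinearMap.range_comp_le_range _ _

lemma cols_mul [Fintype C] (A : Matrix R C ℝ) (W : Matrix C ι ℝ) (α : ι) :
    (fun x => (A * W) x α) = ∑ γ, W γ α • fun x => A x γ := by
  ext x
  simp [Matrix.mul_apply, Finset.sum_apply, mul_comm]

lemma exists_eq_mul_of_colSpace_le [Fintype C] {B : Matrix R ι ℝ} {A : Matrix R C ℝ}
    (h : colSpace B ≤ colSpace A) : ∃ W : Matrix C ι ℝ, B = A * W := by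
  have hcol (α : ι) : ∃ w : C → ℝ, ∑ γ, w γ • (fun x => A x γ) = fun x => B x α :=
    (Submodule.mem_span_range_iff_exists_fun ℝ).mp (h (Submodule.subset_span ⟨α, rfl⟩))
  choose w hw using hcol
  refine ⟨Matrix.of fun γ α => w α γ, Matrix.ext fun x α => ?_⟩
  rw [← congrFun (hw α) x]
  simp [Matrix.mul_apply, Finset.sum_apply, mul_comm]

lemma finrank_colSpace_of_transpose_mul_self_eq_one [Fintype R] [Fintype ι] [DecidableEq ι]
    {B : Matrix R ι ℝ} (hB : Bᵀ * B = 1) :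
    Module.finrank ℝ (colSpace B) = Fintype.card ι := by
  rw [colSpace_eq_range_mulVecLin, ← Matrix.rank, ← Matrix.rank_transpose_mul_self, hB,
    Matrix.rank_one]

lemma exists_lift_cols_colSpace_eq {R' : Type*} [Finite R] [Fintype C] [Fintype ι]
    (L : (R → ℝ) →ₗ[ℝ] (R' → ℝ)) (A : Matrix R C ℝ) (B : Matrix R' ι ℝ)
    (hB : colSpace B ≤ colSpace (Matrix.of fun q γ => L (fun x => A x γ) q))
    (hrank : Module.finrank ℝ (colSpace A) ≤ Module.finrank ℝ (colSpace B)) :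
    ∃ Φ : Matrix R ι ℝ, colSpace Φ = colSpace A ∧ ∀ q α, B q α = L (fun x => Φ x α) q := by
  obtain ⟨W, rfl⟩ := exists_eq_mul_of_colSpace_le hB
  have hlift (q : R') (α : ι) : ((Matrix.of fun q γ => L (fun x => A x γ) q) * W) q α =
      L (fun x => (A * W) x α) q := by
    rw [cols_mul, map_sum]
    simp [Matrix.mul_apply, Finset.sum_apply, mul_comm]
  refine ⟨A * W, Submodule.eq_of_le_of_finrank_le (colSpace_mul_le A W) ?_, hlift⟩
  calc Module.finrank ℝ (colSpace A)
      ≤ Module.finrank ℝ (colSpace ((Matrix.of fun q γ => L (fun x => A x γ) q) * W)) := hrank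
    _ = Module.finrank ℝ ((colSpace (A * W)).map L) := by
      rw [← colSpace_of_map_cols, Matrix.ext hlift]
      rfl
    _ ≤ Module.finrank ℝ (colSpace (A * W)) := Submodule.finrank_map_le L _

end ColSpace

section Sketch

variable {n m : ℕ → ℕ}

/-- The contraction `S_j ⊗ id`, sending the columns of `Φ̄_{j+1}` to those of `Φ̃_{j+1}`. -/
noncomputable def sketchMap (s : ∀ k : ℕ, Fin (m (k + 1)) → Fin (n k) → Fin (m k) → ℝ)
    (j : ℕ) : (PreIdx n (j + 1) → ℝ) →ₗ[ℝ] (Fin (m j) × Fin (n j) → ℝ) where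
  toFun f q := ∑ z, leftSketch s j q.1 z * f (snoc' z q.2)
  map_add' f g := by
    ext q
    simp [mul_add, Finset.sum_add_distrib]
  map_smul' a f := by
    ext q
    simp [Finset.mul_sum, mul_left_comm]

lemma snoc'_zero (z : PreIdx n 0) (x : PreIdx n 1) : snoc' z (x ⟨0, Nat.one_pos⟩) = x := by
  funext i
  obtain rfl : i = ⟨0, Nat.one_pos⟩ := Fin.ext (Nat.lt_one_iff.mp i.isLt)
  rfl

lemma tildePhi_zero {d : ℕ} {ℓ : ℕ → ℕ} (p : PreIdx n d → ℝ)
    (T : ∀ k : ℕ, SufIdx n d k → Fin (ℓ k) → ℝ)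
    (s : ∀ k : ℕ, Fin (m (k + 1)) → Fin (n k) → Fin (m k) → ℝ)
    (β : Fin (m 0)) (x : PreIdx n 1) (γ : Fin (ℓ 1)) :
    tildePhi p T s 0 β (x ⟨0, Nat.one_pos⟩) γ = rightSketched p T 1 x γ := by
  simp only [tildePhi, leftSketch, one_mul, snoc'_zero, Finset.sum_const, Finset.card_univ,
    Fintype.card_unique, one_smul]

lemma colSpace_slice_eq_colSpace_rightSketched_one {d : ℕ} {ℓ : ℕ → ℕ} {r : ℕ}
    (p : PreIdx n d → ℝ) (T : ∀ k : ℕ, SufIdx n d k → Fin (ℓ k) → ℝ)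
    (s : ∀ k : ℕ, Fin (m (k + 1)) → Fin (n k) → Fin (m k) → ℝ)
    (B : Fin (m 0) → Fin (n 0) → Fin r → ℝ)
    (hB : colSpace (Matrix.of fun (q : Fin (m 0) × Fin (n 0)) α => B q.1 q.2 α) =
      colSpace (Matrix.of fun (q : Fin (m 0) × Fin (n 0)) γ => tildePhi p T s 0 q.1 q.2 γ))
    (c : Fin (m 0)) :
    colSpace (Matrix.of fun (x : PreIdx n 1) α => B c (x ⟨0, Nat.one_pos⟩) α) =
      colSpace (Matrix.of (rightSketched p T 1)) := by
  let slice := LinearMap.funLeft ℝ ℝ fun x : PreIdx n 1 => (c, x ⟨0, Nat.one_pos⟩)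
  calc colSpace (Matrix.of fun (x : PreIdx n 1) α => B c (x ⟨0, Nat.one_pos⟩) α)
      = (colSpace (Matrix.of fun (q : Fin (m 0) × Fin (n 0)) α => B q.1 q.2 α)).map slice := by
        rw [← colSpace_of_map_cols]
        rfl
    _ = colSpace (Matrix.of fun (x : PreIdx n 1) γ =>
          tildePhi p T s 0 c (x ⟨0, Nat.one_pos⟩) γ) := by
        rw [hB, ← colSpace_of_map_cols]
        rfl
    _ = colSpace (Matrix.of (rightSketched p T 1)) := by
        simp only [tildePhi_zero]

end Sketch

/-- Indexing is 0-based: `B j` and `tildePhi … j` are the paper's `B_{j+1}` and `Φ̃_{j+1}`,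
and `d = d₀ + 2`. -/
theorem ttrs_trimming_gives_sketched_exact_factors_general
    (d₀ : ℕ) (n r ℓ m : ℕ → ℕ)
    (p : PreIdx n (d₀ + 2) → ℝ)
    (hrank : ∀ k, 1 ≤ k → k ≤ d₀ + 1 → mrank (unfold p k) = r k)
    (T : ∀ k : ℕ, SufIdx n (d₀ + 2) k → Fin (ℓ k) → ℝ)
    (s : ∀ j : ℕ, Fin (m (j + 1)) → Fin (n j) → Fin (m j) → ℝ)
    (B : ∀ j : ℕ, Fin (m j) → Fin (n j) → Fin (r (j + 1)) → ℝ)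
    (hBortho : ∀ j, j ≤ d₀ →
      (Matrix.of fun (q : Fin (m j) × Fin (n j)) (α : Fin (r (j + 1))) => B j q.1 q.2 α)ᵀ *
        (Matrix.of fun (q : Fin (m j) × Fin (n j)) (α : Fin (r (j + 1))) => B j q.1 q.2 α) = 1)
    (hBspan : ∀ j, j ≤ d₀ →
      colSpace (Matrix.of fun (q : Fin (m j) × Fin (n j)) (α : Fin (r (j + 1))) =>
          B j q.1 q.2 α) =
        colSpace (Matrix.of fun (q : Fin (m j) × Fin (n j)) (γ : Fin (ℓ (j + 1))) =>
          tildePhi p T s j q.1 q.2 γ))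
    (hi : ∀ k, 1 ≤ k → k ≤ d₀ + 1 →
      colSpace (Matrix.of (rightSketched p T k)) = colSpace (unfold p k)) :
    (∀ c : Fin (m 0),
      colSpace (Matrix.of fun (x : PreIdx n 1) (α : Fin (r 1)) =>
          B 0 c (x ⟨0, Nat.one_pos⟩) α) = colSpace (unfold p 1)) ∧
    ∀ j, 1 ≤ j → j ≤ d₀ →
      ∃ Φk : PreIdx n (j + 1) → Fin (r (j + 1)) → ℝ,
        colSpace (Matrix.of Φk) = colSpace (unfold p (j + 1)) ∧
        ∀ (β : Fin (m j)) (x : Fin (n j)) (α : Fin (r (j + 1))),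
          B j β x α = ∑ z : PreIdx n j, leftSketch s j β z * Φk (snoc' z x) α := by
  refine ⟨fun c => ?_, fun j hj1 hj2 => ?_⟩
  · rw [colSpace_slice_eq_colSpace_rightSketched_one p T s (B 0) (hBspan 0 d₀.zero_le) c,
      hi 1 le_rfl (by omega)]
  have hrank_le : Module.finrank ℝ (colSpace (Matrix.of (rightSketched p T (j + 1)))) ≤
      Module.finrank ℝ
        (colSpace (Matrix.of fun (q : Fin (m j) × Fin (n j)) α => B j q.1 q.2 α)) := by
    rw [hi (j + 1) (by omega) (by omega),
      finrank_colSpace_of_transpose_mul_self_eq_one (hBortho j hj2), Fintype.card_fin]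
    exact (hrank (j + 1) (by omega) (by omega)).le
  obtain ⟨Φ, hΦ, hBΦ⟩ := exists_lift_cols_colSpace_eq (sketchMap s j)
    (Matrix.of (rightSketched p T (j + 1))) _ (hBspan j hj2).le hrank_le
  exact ⟨Φ, hΦ.trans (hi (j + 1) (by omega) (by omega)), fun β x α => hBΦ (β, x) α⟩

/-- Lemma: the trimmed tensors `B_k` are sketched versions of suitable
exact factors `Φ_k`.
Under conditions (i) (each `Φ̄_k` has the same column space as the `k`-th unfolding
matrix) and (ii) (each `Φ̃_k` has the same row space as `Φ̄_k`):
(a) the column space of `B_1` equals the column space of the first unfolding matrix of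
`p`, and (b) for each `k = 2, …, d-1` there is a `Φ_k` whose column space equals the
column space of the `k`-th unfolding matrix, with `B_k = S_{k-1} ∘ Φ_k`.
(Here `d = d₀ + 2 ≥ 2`, 0-based indexing: `B j`, `tildePhi … j` correspond to the
paper's `B_{j+1}`, `Φ̃_{j+1}`; the first left sketch block carries a dummy
index of size `m 0 = 1`.) -/
theorem ttrs_trimming_gives_sketched_exact_factors
    (d₀ : ℕ) (n r ℓ m : ℕ → ℕ) (hm0 : m 0 = 1)
    (p : PreIdx n (d₀ + 2) → ℝ)
    (hrank : ∀ k, 1 ≤ k → k ≤ d₀ + 1 → mrank (unfold p k) = r k)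
    (hℓ : ∀ k, 1 ≤ k → k ≤ d₀ + 1 → r k ≤ ℓ k)
    (T : ∀ k : ℕ, SufIdx n (d₀ + 2) k → Fin (ℓ k) → ℝ)
    (s : ∀ j : ℕ, Fin (m (j + 1)) → Fin (n j) → Fin (m j) → ℝ)
    (B : ∀ j : ℕ, Fin (m j) → Fin (n j) → Fin (r (j + 1)) → ℝ)
    (hBortho : ∀ j, j ≤ d₀ →
      (Matrix.of fun (q : Fin (m j) × Fin (n j)) (α : Fin (r (j + 1))) => B j q.1 q.2 α)ᵀ *
        (Matrix.of fun (q : Fin (m j) × Fin (n j)) (α : Fin (r (j + 1))) => B j q.1 q.2 α) = 1)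
    (hBspan : ∀ j, j ≤ d₀ →
      colSpace (Matrix.of fun (q : Fin (m j) × Fin (n j)) (α : Fin (r (j + 1))) =>
          B j q.1 q.2 α) =
        colSpace (Matrix.of fun (q : Fin (m j) × Fin (n j)) (γ : Fin (ℓ (j + 1))) =>
          tildePhi p T s j q.1 q.2 γ))
    (hi : ∀ k, 1 ≤ k → k ≤ d₀ + 1 →
      colSpace (Matrix.of (rightSketched p T k)) = colSpace (unfold p k))
    (hii : ∀ j, 1 ≤ j → j ≤ d₀ →
      rowSpace (Matrix.of fun (q : Fin (m j) × Fin (n j)) (γ : Fin (ℓ (j + 1))) =>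
          tildePhi p T s j q.1 q.2 γ) =
        rowSpace (Matrix.of (rightSketched p T (j + 1)))) :
    (∀ c : Fin (m 0),
      colSpace (Matrix.of fun (x : PreIdx n 1) (α : Fin (r 1)) =>
          B 0 c (x ⟨0, Nat.one_pos⟩) α) = colSpace (unfold p 1)) ∧
    ∀ j, 1 ≤ j → j ≤ d₀ →
      ∃ Φk : PreIdx n (j + 1) → Fin (r (j + 1)) → ℝ,
        colSpace (Matrix.of Φk) = colSpace (unfold p (j + 1)) ∧
        ∀ (β : Fin (m j)) (x : Fin (n j)) (α : Fin (r (j + 1))),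
          B j β x α = ∑ z : PreIdx n j, leftSketch s j β z * Φk (snoc' z x) α :=
  ttrs_trimming_gives_sketched_exact_factors_general d₀ n r ℓ m p hrank T s B hBortho hBspan hi
end

section
/- Let p be a discrete Markov model on [n_1]×⋯×[n_d]. Then for any indices 1 ≤ i ≤ k < j ≤ d, the matrix p((x_i,…,x_k);(x_{k+1},…,x_j)) (the marginal of p on variables x_i,…,x_j, viewed as a matrix with rows indexed by (x_i,…,x_k) and columns by (x_{k+1},…,x_j)) and the matrix p(x_k;(x_{k+1},…,x_j)) (the marginal of p on variables x_k,…,x_j, with rows indexed by x_k and columns by (x_{k+1},…,x_j)) have the same row space. -/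
open scoped BigOperators
open Matrix

/-!
Summing the Markov factorization `p · p_k = p_{1:k} · p_{k:d}` over the variables outside the
window `[i, j]` gives the same factorization of the window marginal,
`p_{i:j} · p_k = p_{i:k} · p_{k:j}`: a configuration is determined by its restrictions to
`[1, k]` and `[k, d]`, which only have to agree at `k`. So the row `x_{i:k}` of the first matrix
is the multiple `p_{i:k}(x_{i:k}) / p_k(x_k)` of the row `x_k` of the second one (both vanish
when `p_k(x_k) = 0`), and conversely the row `x_k` of the second matrix is the sum of the rows
`x_{i:k}` of the first one that end in `x_k`.
-/

section AgreeOn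

variable {ι : Type*} {β : ι → Type*} {s t u v : Set ι}

def AgreeOn (s : Set ι) (w w' : ∀ i, β i) : Prop :=
  ∀ i ∈ s, w i = w' i

theorem AgreeOn.mono {w w' : ∀ i, β i} (h : AgreeOn t w w') (hst : s ⊆ t) : AgreeOn s w w' :=
  fun i hi => h i (hst hi)

theorem agreeOn_iff_domRestrict_eq {w w' : ∀ i, β i} :
    AgreeOn s w w' ↔ s.domRestrict w = s.domRestrict w' := by
  rw [Set.domRestrict_eq_iff]
  rfl

theorem agreeOn_union {w w' : ∀ i, β i} :
    AgreeOn (s ∪ t) w w' ↔ AgreeOn s w w' ∧ AgreeOn t w w' := by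
  simp only [AgreeOn, Set.mem_union, or_imp, forall_and]

theorem agreeOn_and_agreeOn_iff (hst : s ∪ t = Set.univ) [∀ i, Decidable (i ∈ s)]
    {w a b : ∀ i, β i} :
    AgreeOn s w a ∧ AgreeOn t w b ↔ w = s.piecewise a b ∧ AgreeOn (s ∩ t) a b := by
  constructor
  · rintro ⟨hs, ht⟩
    refine ⟨funext fun i => ?_, fun i ⟨his, hit⟩ => (hs i his).symm.trans (ht i hit)⟩
    by_cases hi : i ∈ s
    · rw [Set.piecewise_eq_of_mem _ _ _ hi, hs i hi]
    · have hit : i ∈ t := (Set.eq_univ_iff_forall.mp hst i).resolve_left hi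
      rw [Set.piecewise_eq_of_notMem _ _ _ hi, ht i hit]
  · rintro ⟨rfl, hab⟩
    refine ⟨fun i hi => Set.piecewise_eq_of_mem _ _ _ hi, fun i hit => ?_⟩
    by_cases hi : i ∈ s
    · rw [Set.piecewise_eq_of_mem _ _ _ hi, hab i ⟨hi, hit⟩]
    · rw [Set.piecewise_eq_of_notMem _ _ _ hi]

theorem agreeOn_inter_and_agreeOn_piecewise_iff [∀ i, Decidable (i ∈ s)] (hu : s ∩ t ⊆ u)
    (hus : u ⊆ s) (hsv : Disjoint s v) {a b w : ∀ i, β i} :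
    AgreeOn (s ∩ t) a b ∧ AgreeOn (u ∪ v) w (s.piecewise a b) ↔
      AgreeOn u w a ∧ AgreeOn (s ∩ t ∪ v) w b := by
  have hv : ∀ i ∈ v, i ∉ s := fun i hi his => Set.disjoint_left.mp hsv his hi
  simp only [agreeOn_union]
  constructor
  · rintro ⟨hab, hpu, hpv⟩
    refine ⟨fun i hi => ?_, fun i hi => ?_, fun i hi => ?_⟩
    · rw [hpu i hi, Set.piecewise_eq_of_mem _ _ _ (hus hi)]
    · rw [← hab i hi, hpu i (hu hi), Set.piecewise_eq_of_mem _ _ _ hi.1]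
    · rw [hpv i hi, Set.piecewise_eq_of_notMem _ _ _ (hv i hi)]
  · rintro ⟨hwa, hwb, hwv⟩
    refine ⟨fun i hi => (hwa i (hu hi)).symm.trans (hwb i hi), fun i hi => ?_, fun i hi => ?_⟩
    · rw [Set.piecewise_eq_of_mem _ _ _ (hus hi), hwa i hi]
    · rw [Set.piecewise_eq_of_notMem _ _ _ (hv i hi), hwv i hi]

theorem exists_domRestrict_eq_and_domRestrict_eq [Nonempty (∀ i, β i)] (hst : Disjoint s t)
    (x : ∀ i : s, β i) (y : ∀ i : t, β i) :
    ∃ w, s.domRestrict w = x ∧ t.domRestrict w = y := by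
  classical
  obtain ⟨w₀⟩ := ‹Nonempty (∀ i, β i)›
  refine ⟨fun i => if h : i ∈ s then x ⟨i, h⟩ else if h' : i ∈ t then y ⟨i, h'⟩ else w₀ i,
    funext fun i => dif_pos i.2, funext fun i => ?_⟩
  simp [Set.disjoint_right.mp hst i.2]

end AgreeOn

section Marginal

variable {ι : Type*} [Fintype ι] [DecidableEq ι] {β : ι → Type*} [∀ i, Fintype (β i)]

open Classical in
noncomputable def marginal (p : (∀ i, β i) → ℝ) (s : Set ι) (w : ∀ i, β i) : ℝ :=
  ∑ w' with AgreeOn s w w', p w'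

def CondIndep (p : (∀ i, β i) → ℝ) (s t : Set ι) : Prop :=
  ∀ w, p w * marginal p (s ∩ t) w = marginal p s w * marginal p t w

variable {p : (∀ i, β i) → ℝ} {s t u v : Set ι}

theorem marginal_congr {w w' : ∀ i, β i} (hst : s ⊆ t) (h : AgreeOn t w w') :
    marginal p s w = marginal p s w' := by
  have h' : ∀ w'', AgreeOn s w w'' ↔ AgreeOn s w' w'' := fun w'' =>
    ⟨fun h₁ i hi => (h i (hst hi)).symm.trans (h₁ i hi),
      fun h₁ i hi => (h i (hst hi)).trans (h₁ i hi)⟩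
  classical
  rw [marginal, marginal, Finset.filter_congr fun w'' _ => h' w'']

theorem marginal_nonneg (hp : ∀ w, 0 ≤ p w) (s : Set ι) (w : ∀ i, β i) :
    0 ≤ marginal p s w :=
  Finset.sum_nonneg fun w' _ => hp w'

theorem marginal_anti (hp : ∀ w, 0 ≤ p w) (hst : s ⊆ t) (w : ∀ i, β i) :
    marginal p t w ≤ marginal p s w := by
  classical
  refine Finset.sum_le_sum_of_subset_of_nonneg ?_ fun w' _ _ => hp w'
  exact Finset.monotone_filter_right _ fun w' _ h => h.mono hst

open Classical in
theorem CondIndep.marginal_union_mul (h : CondIndep p s t) (hst : s ∪ t = Set.univ)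
    (hu : s ∩ t ⊆ u) (hus : u ⊆ s) (hsv : Disjoint s v) (w : ∀ i, β i) :
    marginal p (u ∪ v) w * marginal p (s ∩ t) w =
      marginal p u w * marginal p (s ∩ t ∪ v) w := by
  have hcount : ∀ a b : ∀ i, β i,
      (∑ w' : ∀ i, β i, if AgreeOn (u ∪ v) w w' ∧ (AgreeOn s w' a ∧ AgreeOn t w' b)
        then p a * p b else 0) =
      if AgreeOn u w a ∧ AgreeOn (s ∩ t ∪ v) w b then p a * p b else 0 := by
    -- the only candidate is `w' = s.piecewise a b`, available iff `a` and `b` agree on `s ∩ t`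
    intro a b
    simp only [agreeOn_and_agreeOn_iff hst, ← agreeOn_inter_and_agreeOn_piecewise_iff hu hus hsv]
    rw [Fintype.sum_eq_single (s.piecewise a b) fun x hx => if_neg fun hc => hx hc.2.1]
    simp only [true_and, and_comm]
  calc marginal p (u ∪ v) w * marginal p (s ∩ t) w
      = ∑ w' with AgreeOn (u ∪ v) w w', marginal p s w' * marginal p t w' := by
        rw [marginal, Finset.sum_mul]
        refine Finset.sum_congr rfl fun w' hw' => ?_
        rw [marginal_congr (hu.trans Set.subset_union_left) (Finset.mem_filter.mp hw').2, h w']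
    _ = ∑ w', ∑ a, ∑ b, if AgreeOn (u ∪ v) w w' ∧ (AgreeOn s w' a ∧ AgreeOn t w' b)
          then p a * p b else 0 := by
        rw [Finset.sum_filter]
        refine Finset.sum_congr rfl fun w' _ => ?_
        split_ifs with hw'
        · simp only [marginal, Finset.sum_filter, Finset.sum_mul_sum, ite_zero_mul_ite_zero, hw',
            true_and]
        · simp only [hw', false_and, if_false, Finset.sum_const_zero]
    _ = ∑ a, ∑ b, ∑ w', if AgreeOn (u ∪ v) w w' ∧ (AgreeOn s w' a ∧ AgreeOn t w' b)
          then p a * p b else 0 := by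
        rw [Finset.sum_comm]
        exact Finset.sum_congr rfl fun _ _ => Finset.sum_comm
    _ = ∑ a, ∑ b, if AgreeOn u w a ∧ AgreeOn (s ∩ t ∪ v) w b then p a * p b else 0 := by
        simp only [hcount]
    _ = marginal p u w * marginal p (s ∩ t ∪ v) w := by
        simp only [marginal, Finset.sum_filter, Finset.sum_mul_sum, ite_zero_mul_ite_zero]

/-- With `x / 0 = 0` this also holds where `s ∩ t` has zero marginal, since then so has
`u ∪ v ⊇ s ∩ t`. -/
theorem CondIndep.marginal_union_eq (h : CondIndep p s t) (hp : ∀ w, 0 ≤ p w)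
    (hst : s ∪ t = Set.univ) (hu : s ∩ t ⊆ u) (hus : u ⊆ s) (hsv : Disjoint s v)
    (w : ∀ i, β i) :
    marginal p (u ∪ v) w =
      marginal p u w / marginal p (s ∩ t) w * marginal p (s ∩ t ∪ v) w := by
  by_cases h₀ : marginal p (s ∩ t) w = 0
  · rw [h₀, div_zero, zero_mul]
    exact le_antisymm (h₀ ▸ marginal_anti hp (hu.trans Set.subset_union_left) w)
      (marginal_nonneg hp _ w)
  · rw [div_mul_eq_mul_div, eq_div_iff h₀, h.marginal_union_mul hst hu hus hsv]

end Marginal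

section Window

variable {d : ℕ} {n : ℕ → ℕ}

def window (d a b : ℕ) : Set (Fin d) := {i | a ≤ (i : ℕ) ∧ (i : ℕ) < b}

def restrictWindow (a b : ℕ) (w : PreIdx n d) : MidIdx n d a b :=
  fun i => w i.1

def MidIdx.restrict {a e c : ℕ} (hae : a ≤ e) (x : MidIdx n d a c) : MidIdx n d e c :=
  fun i => x ⟨i.1, hae.trans i.2.1, i.2.2⟩

theorem agreeOn_window_iff {a b : ℕ} {w w' : PreIdx n d} :
    AgreeOn (window d a b) w w' ↔ restrictWindow a b w = restrictWindow a b w' :=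
  agreeOn_iff_domRestrict_eq

theorem window_subset_window {a b a' b' : ℕ} (ha : a ≤ a') (hb : b' ≤ b) :
    window d a' b' ⊆ window d a b :=
  fun _ hi => ⟨ha.trans hi.1, hi.2.trans_le hb⟩

theorem disjoint_window_window (a b c : ℕ) : Disjoint (window d a b) (window d b c) :=
  Set.disjoint_left.mpr fun _ h₁ h₂ => absurd h₂.1 (not_le.mpr h₁.2)

theorem window_union_window {a b c : ℕ} (hab : a ≤ b) (hbc : b ≤ c) :
    window d a b ∪ window d b c = window d a c := by
  ext i
  simp only [window, Set.mem_union, Set.mem_ofPred_eq]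
  omega

theorem exists_restrictWindow_eq [Nonempty (PreIdx n d)] {a c b : ℕ} (x : MidIdx n d a c)
    (y : MidIdx n d c b) : ∃ w, restrictWindow a c w = x ∧ restrictWindow c b w = y :=
  exists_domRestrict_eq_and_domRestrict_eq (β := fun i : Fin d => Fin (n i))
    (disjoint_window_window a c b) x y

theorem window_zero_inter_window (k : ℕ) :
    window d 0 k ∩ window d (k - 1) d = window d (k - 1) k := by
  ext i
  simp only [window, Set.mem_inter_iff, Set.mem_ofPred_eq]
  omega

theorem winMarg_restrictWindow (p : PreIdx n d → ℝ) (a b : ℕ) (w : PreIdx n d) :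
    winMarg p a b (restrictWindow a b w) = marginal p (window d a b) w := by
  classical
  unfold winMarg marginal
  symm
  refine Finset.sum_nbij' (fun w' j => w' j.1)
    (fun z i => if h : a ≤ (i : ℕ) ∧ (i : ℕ) < b then w i else z ⟨i, by omega⟩)
    (fun _ _ => Finset.mem_univ _) (fun z _ => ?_) (fun w' hw' => ?_) (fun z _ => ?_)
    (fun w' hw' => ?_)
  · simp only [Finset.mem_filter, Finset.mem_univ, true_and]
    intro i hi
    simp only [dif_pos (show a ≤ (i : ℕ) ∧ (i : ℕ) < b from hi)]
  · funext i
    split_ifs with hi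
    · exact (Finset.mem_filter.mp hw').2 i hi
    · rfl
  · funext j
    exact dif_neg (by have := j.2; omega)
  · congr 1
    funext i
    split_ifs with hi
    · exact ((Finset.mem_filter.mp hw').2 i hi).symm
    · rfl

theorem winMatrix_restrictWindow (p : PreIdx n d → ℝ) {a c b : ℕ} (hac : a ≤ c) (hcb : c ≤ b)
    (w : PreIdx n d) :
    winMatrix p a c b (restrictWindow a c w) (restrictWindow c b w) =
      marginal p (window d a b) w := by
  rw [← winMarg_restrictWindow]
  unfold winMarg
  refine Finset.sum_congr rfl fun z _ => congrArg p (funext fun i => ?_)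
  split_ifs <;> first | rfl | omega

theorem IsMarkov.nonempty {p : PreIdx n d → ℝ} (hp : IsMarkov p) : Nonempty (PreIdx n d) := by
  by_contra h
  have := hp.2.1
  rw [not_nonempty_iff] at h
  simp at this

theorem IsMarkov.condIndep {p : PreIdx n d → ℝ} (hp : IsMarkov p) {k : ℕ} (hk : 2 ≤ k)
    (hkd : k ≤ d - 1) : CondIndep p (window d 0 k) (window d (k - 1) d) := by
  intro w
  rw [window_zero_inter_window, ← winMarg_restrictWindow, ← winMarg_restrictWindow,
    ← winMarg_restrictWindow]
  exact hp.2.2 k hk hkd w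

end Window

section Rows

variable {d : ℕ} {n : ℕ → ℕ} {p : PreIdx n d → ℝ}

theorem winMatrix_eq_sum [Nonempty (PreIdx n d)] {a c b : ℕ} (hac : a ≤ c) (hcb : c ≤ b)
    (x : MidIdx n d a c) (y : MidIdx n d c b) :
    winMatrix p a c b x y =
      ∑ w, if x = restrictWindow a c w ∧ y = restrictWindow c b w then p w else 0 := by
  obtain ⟨w₀, rfl, rfl⟩ := exists_restrictWindow_eq x y
  rw [winMatrix_restrictWindow p hac hcb, marginal, Finset.sum_filter]
  refine Finset.sum_congr rfl fun w _ => ?_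
  congr 1
  rw [← window_union_window hac hcb, agreeOn_union, agreeOn_window_iff, agreeOn_window_iff]

theorem winMatrix_eq_sum_winMatrix [Nonempty (PreIdx n d)] {a e c b : ℕ} (hae : a ≤ e)
    (hec : e ≤ c) (hcb : c ≤ b) (x' : MidIdx n d e c) :
    winMatrix p e c b x' = ∑ x with x' = x.restrict hae, winMatrix p a c b x := by
  funext y
  trans ∑ x with x' = x.restrict hae, winMatrix p a c b x y
  · rw [winMatrix_eq_sum hec hcb]
    simp only [winMatrix_eq_sum (hae.trans hec) hcb]
    rw [Finset.sum_comm]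
    refine Finset.sum_congr rfl fun w _ => ?_
    simp only [ite_and]
    rw [Finset.sum_ite_eq']
    simp only [Finset.mem_filter, Finset.mem_univ, true_and]
    rfl
  · exact (Finset.sum_apply y _ _).symm

theorem IsMarkov.winMatrix_eq_div_mul (hp : IsMarkov p) {a c b : ℕ} (hac : a ≤ c - 1)
    (hc : 2 ≤ c) (hcb : c < b) (hbd : b ≤ d) (x : MidIdx n d a c) (y : MidIdx n d c b) :
    winMatrix p a c b x y =
      winMarg p a c x / winMarg p (c - 1) c (x.restrict hac) *
        winMatrix p (c - 1) c b (x.restrict hac) y := by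
  have := hp.nonempty
  obtain ⟨w, rfl, rfl⟩ := exists_restrictWindow_eq x y
  have hst : window d 0 c ∪ window d (c - 1) d = Set.univ := by
    ext i
    simp only [window, Set.mem_union, Set.mem_ofPred_eq, Set.mem_univ, iff_true]
    omega
  have key := (hp.condIndep hc (by omega)).marginal_union_eq hp.1 hst
    (u := window d a c) (v := window d c b) (fun i hi => ⟨hac.trans hi.2.1, hi.1.2⟩)
    (window_subset_window (Nat.zero_le a) le_rfl) (disjoint_window_window 0 c b) w
  rw [window_union_window (by omega) hcb.le, window_zero_inter_window,
    window_union_window (by omega) hcb.le] at key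
  rw [winMatrix_restrictWindow p (by omega) hcb.le, key, ← winMarg_restrictWindow,
    ← winMarg_restrictWindow, ← winMatrix_restrictWindow p (by omega) hcb.le]
  rfl

end Rows

/-- In 0-based indexing the paper's `1 ≤ i ≤ k < j ≤ d` reads `a = i - 1 < c = k < b = j ≤ d`:
rows are the variables in `[a, c)`, columns those in `[c, b)`, and the second matrix has its rows
in `[c - 1, c)`. -/
theorem markov_rowSpace_eq
    (d : ℕ) (n : ℕ → ℕ) (p : PreIdx n d → ℝ) (hp : IsMarkov p)
    (a c b : ℕ) (hac : a < c) (hcb : c < b) (hbd : b ≤ d) :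
    rowSpace (winMatrix p a c b) = rowSpace (winMatrix p (c - 1) c b) := by
  obtain rfl | hac' : a = c - 1 ∨ a < c - 1 := by omega
  · rfl
  have := hp.nonempty
  apply le_antisymm <;> refine Submodule.span_le.mpr ?_ <;> rintro _ ⟨x, rfl⟩
  · have hrow : winMatrix p a c b x =
        (winMarg p a c x / winMarg p (c - 1) c (x.restrict hac'.le)) •
          winMatrix p (c - 1) c b (x.restrict hac'.le) :=
      funext fun y => hp.winMatrix_eq_div_mul hac'.le (by omega) hcb hbd x y
    show winMatrix p a c b x ∈ _
    rw [hrow]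
    exact Submodule.smul_mem _ _ (Submodule.subset_span ⟨_, rfl⟩)
  · show winMatrix p (c - 1) c b x ∈ _
    rw [winMatrix_eq_sum_winMatrix hac'.le (Nat.sub_le c 1) hcb.le x]
    exact Submodule.sum_mem _ fun x _ => Submodule.subset_span ⟨x, rfl⟩
end

section
/- Let p be a discrete Markov model on [n_1]×⋯×[n_d] and let 2 ≤ k ≤ d−1 be such that the rank of the k-th unfolding matrix of p is r_k. Let B_k : [n_{k−1}]×[n_k]×[r_k] → ℝ be any tensor whose columns (as a matrix with rows indexed by (x_{k−1},x_k) and columns by α_k) are orthonormal and span the column space of the triple-marginal matrix p((x_{k−1},x_k);x_{k+1}). Then the matrix A_k : [n_k]×[r_k] → ℝ defined by A_k(x_k,α_k) = Σ_{x_{k−1}=1}^{n_{k−1}} B_k(x_{k−1},x_k,α_k) has rank r_k. -/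
open scoped BigOperators
open Matrix

/-!
Write `P(w, x, y)` for the marginal of `p` on `(x_{k-1}, x_k, x_{k+1})`, which are the 0-based
coordinates `t, t + 1, t + 2` of a `PreIdx` since `k = t + 2`. The Markov property makes
`x_{k-1}` and `x_{k+1}` conditionally independent given `x_k`, i.e.
`P(w, x, y) = P(w | x) · ∑_{w'} P(w', x, y)`. This linear relation holds for every column of
the triple-marginal matrix, hence on its column space, which is the column space of `B`. So a
vector `B v` whose sums over `x_{k-1}` all vanish is zero. If `A v = 0` these sums are the
entries of `A v`, so `B v = 0` and `v = Bᵀ B v = 0`: the `r_k` columns of `A` are linearly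
independent.
-/

open Finset

lemma mrank_eq_card_of_mulVec_eq_zero {R C : Type*} [Fintype C] (M : Matrix R C ℝ)
    (hM : ∀ v, M *ᵥ v = 0 → v = 0) : mrank M = Fintype.card C :=
  finrank_span_eq_card <| Matrix.mulVec_injective_iff.mp <|
    LinearMap.ker_eq_bot.mp (Matrix.ker_mulVecLin_eq_bot_iff.mpr hM)

lemma mulVec_mem_colSpace {R C : Type*} [Fintype C] (M : Matrix R C ℝ) (v : C → ℝ) :
    M *ᵥ v ∈ colSpace M := by
  change M *ᵥ v ∈ Submodule.span ℝ (Set.range M.col)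
  rw [← Matrix.range_mulVecLin]
  exact LinearMap.mem_range_self M.mulVecLin v

section FiberwiseProportional

variable {α β : Type*} [Fintype α]

def fiberwiseProportional (κ : α × β → ℝ) : Submodule ℝ (α × β → ℝ) where
  carrier := {v | ∀ q, v q = κ q * ∑ a, v (a, q.2)}
  add_mem' {v w} hv hw q := by
    simp only [Pi.add_apply, sum_add_distrib]
    rw [mul_add, ← hv q, ← hw q]
  zero_mem' q := by simp
  smul_mem' c v hv q := by
    simp only [Pi.smul_apply, smul_eq_mul, ← mul_sum]
    rw [hv q]
    ring

lemma eq_zero_of_mem_fiberwiseProportional {κ : α × β → ℝ} {v : α × β → ℝ}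
    (hv : v ∈ fiberwiseProportional κ) (h : ∀ b, ∑ a, v (a, b) = 0) : v = 0 :=
  funext fun q => by rw [hv q, h, mul_zero, Pi.zero_apply]

end FiberwiseProportional

section Marginal

variable {Ω Y Y' Z : Type*} [Fintype Ω] [DecidableEq Y] [DecidableEq Y']

def marg (p : Ω → ℝ) (f : Ω → Y) (y : Y) : ℝ := ∑ u with f u = y, p u

lemma marg_congr (p : Ω → ℝ) {f : Ω → Y} {g : Ω → Y'} {y : Y} {y' : Y'}
    (h : ∀ u, f u = y ↔ g u = y') : marg p f y = marg p g y' :=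
  sum_congr (filter_congr fun u _ => h u) fun _ _ => rfl

lemma marg_nonneg {p : Ω → ℝ} (hp : ∀ u, 0 ≤ p u) (f : Ω → Y) (y : Y) : 0 ≤ marg p f y :=
  sum_nonneg fun u _ => hp u

lemma marg_le_marg {p : Ω → ℝ} (hp : ∀ u, 0 ≤ p u) {f : Ω → Y} {g : Ω → Y'} {y : Y} {y' : Y'}
    (h : ∀ u, f u = y → g u = y') : marg p f y ≤ marg p g y' :=
  sum_le_sum_of_subset_of_nonneg (monotone_filter_right _ fun u _ => h u) fun u _ _ => hp u

lemma sum_marg_prod_mk [Fintype Z] [DecidableEq Z] (p : Ω → ℝ) (f : Ω → Z) (g : Ω → Y)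
    (y : Y) : ∑ z, marg p (fun u => (f u, g u)) (z, y) = marg p g y := by
  simp only [marg, Prod.mk.injEq, and_comm, ← filter_filter]
  exact sum_fiberwise _ f p

lemma marg_eq_sum_of_inverse [Fintype Z] (p : Ω → ℝ) (π : Ω → Y) (ρ : Ω → Z) (g : Y → Z → Ω)
    (hπ : ∀ y z, π (g y z) = y) (hρ : ∀ y z, ρ (g y z) = z) (hg : ∀ u, g (π u) (ρ u) = u)
    (y : Y) : marg p π y = ∑ z, p (g y z) := by
  refine sum_nbij' ρ (g y) ?_ ?_ ?_ ?_ ?_ <;>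
    simp only [mem_filter, mem_univ, true_and, hπ, hρ, implies_true]
  · rintro u rfl
    exact hg u
  · rintro u rfl
    rw [hg]

lemma sum_marg_mul_marg_eq_of_join (f g : Ω → ℝ) (πL : Ω → Y) (πR : Ω → Y')
    (E EL ER : Ω → Prop) [DecidablePred E] [DecidablePred EL] [DecidablePred ER]
    (join : Ω → Ω → Ω)
    (hjoin : ∀ a b u, E u ∧ πL a = πL u ∧ πR b = πR u ↔ u = join a b ∧ EL a ∧ ER b) :
    ∑ u with E u, marg f πL (πL u) * marg g πR (πR u) =
      (∑ a with EL a, f a) * ∑ b with ER b, g b := by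
  classical
  calc _ = ∑ u, ∑ a, ∑ b, if E u ∧ πL a = πL u ∧ πR b = πR u then f a * g b else 0 := by
        simp only [marg, sum_filter, sum_mul_sum, ite_zero_mul_ite_zero, ite_and, ite_sum_zero]
    _ = ∑ a, ∑ b, ∑ u, if u = join a b ∧ EL a ∧ ER b then f a * g b else 0 := by
        simp only [hjoin]
        rw [sum_comm]
        exact sum_congr rfl fun _ _ => sum_comm
    _ = _ := by
        simp only [ite_and, sum_ite_eq', mem_univ, if_true, sum_filter, sum_mul_sum,
          ite_zero_mul_ite_zero]

end Marginal

section Windows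

variable {n : ℕ → ℕ} {d t : ℕ}

def windowRestrict (a b : ℕ) (u : PreIdx n d) : MidIdx n d a b := fun i => u i.1

lemma windowRestrict_eq_windowRestrict_iff {a b : ℕ} {u v : PreIdx n d} :
    windowRestrict a b u = windowRestrict a b v ↔ ∀ i : Fin d, a ≤ i → i < b → u i = v i :=
  ⟨fun h i hai hib => congrFun h ⟨i, hai, hib⟩, fun h => funext fun i => h i i.2.1 i.2.2⟩

lemma winMarg_eq_marg (p : PreIdx n d → ℝ) (a b : ℕ) (y : MidIdx n d a b) :
    winMarg p a b y = marg p (windowRestrict a b) y := by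
  refine (marg_eq_sum_of_inverse p _
    (fun u (i : {i : Fin d // (i : ℕ) < a ∨ b ≤ (i : ℕ)}) => u i.1)
    (fun y z (i : Fin d) =>
      if h : a ≤ (i : ℕ) ∧ (i : ℕ) < b then y ⟨i, h⟩ else z ⟨i, by omega⟩)
    ?_ ?_ ?_ y).symm
  · intro y z
    funext i
    exact dif_pos i.2
  · intro y z
    funext i
    exact dif_neg (by have := i.2; omega)
  · intro u
    funext i
    split_ifs <;> rfl

lemma winMatrix_eq_marg (p : PreIdx n d → ℝ) {a c b : ℕ} (hac : a ≤ c) (hcb : c ≤ b)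
    (x : MidIdx n d a c) (y : MidIdx n d c b) :
    winMatrix p a c b x y =
      marg p (fun u => (windowRestrict a c u, windowRestrict c b u)) (x, y) := by
  refine (marg_eq_sum_of_inverse p _
    (fun u (i : {i : Fin d // (i : ℕ) < a ∨ b ≤ (i : ℕ)}) => u i.1)
    (fun (xy : MidIdx n d a c × MidIdx n d c b) z (i : Fin d) =>
      if h1 : a ≤ (i : ℕ) ∧ (i : ℕ) < c then xy.1 ⟨i, h1⟩
      else if h2 : c ≤ (i : ℕ) ∧ (i : ℕ) < b then xy.2 ⟨i, h2⟩ else z ⟨i, by omega⟩)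
    ?_ ?_ ?_ (x, y)).symm
  · rintro ⟨x, y⟩ z
    refine Prod.ext (funext fun i => dif_pos i.2) (funext fun i => ?_)
    simp only [windowRestrict]
    rw [dif_neg (by have := i.2; omega), dif_pos i.2]
  · intro xy z
    funext i
    simp only
    rw [dif_neg (by have := i.2; omega), dif_neg (by have := i.2; omega)]
  · intro u
    funext i
    split_ifs <;> rfl

lemma windowRestrict_succ_eq_iff {s : ℕ} (hs : s < d) {u : PreIdx n d}
    {y : MidIdx n d s (s + 1)} :
    windowRestrict s (s + 1) u = y ↔ u ⟨s, hs⟩ = y ⟨⟨s, hs⟩, le_rfl, lt_add_one s⟩ := by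
  refine ⟨fun h => congrFun h ⟨⟨s, hs⟩, le_rfl, lt_add_one s⟩,
    fun h => funext fun ⟨⟨j, hj⟩, hj'⟩ => ?_⟩
  obtain rfl : j = s := by simp only at hj'; omega
  exact h

def windowPairEquiv (hd : t + 2 ≤ d) : MidIdx n d t (t + 2) ≃ Fin (n t) × Fin (n (t + 1)) where
  toFun q := (q ⟨⟨t, by omega⟩, by simp⟩, q ⟨⟨t + 1, by omega⟩, by simp⟩)
  invFun wx i :=
    if h : (i.1 : ℕ) = t then Fin.cast (by rw [h]) wx.1
    else Fin.cast (by rw [show (i.1 : ℕ) = t + 1 by have := i.2; omega]) wx.2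
  left_inv q := by
    funext ⟨⟨j, hj⟩, hj'⟩
    obtain rfl | rfl : j = t ∨ j = t + 1 := by simp only at hj'; omega
    all_goals simp
  right_inv wx := by simp

def splice (m : ℕ) (a b : PreIdx n d) : PreIdx n d :=
  fun i => if (i : ℕ) ≤ m then a i else b i

lemma windowRestrict_eq_and_windowRestrict_eq_iff_splice {m : ℕ} (hm : m < d)
    {a b u : PreIdx n d} :
    windowRestrict 0 (m + 1) a = windowRestrict 0 (m + 1) u ∧
        windowRestrict m d b = windowRestrict m d u ↔
      u = splice m a b ∧ a ⟨m, hm⟩ = b ⟨m, hm⟩ := by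
  simp only [windowRestrict_eq_windowRestrict_iff]
  constructor
  · rintro ⟨ha, hb⟩
    refine ⟨funext fun i => ?_, (ha _ (Nat.zero_le _) (lt_add_one m)).trans (hb _ le_rfl hm).symm⟩
    unfold splice
    split_ifs with h
    · exact (ha i (Nat.zero_le _) (by omega)).symm
    · exact (hb i (by omega) i.2).symm
  · rintro ⟨rfl, hab⟩
    refine ⟨fun i _ hi => (if_pos (by omega)).symm, fun i hi _ => ?_⟩
    unfold splice
    split_ifs with h
    · obtain rfl : i = ⟨m, hm⟩ := Fin.ext (le_antisymm h hi)
      exact hab.symm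
    · rfl

end Windows

section Markov

variable {n : ℕ → ℕ} {d t : ℕ}

-- `P(X_t = w | X_{t+1} = x)`; as `a / 0 = 0` in Lean, it is `0` when `P(X_{t+1} = x) = 0`.
noncomputable def condPrev (p : PreIdx n d → ℝ) (hd : t + 2 ≤ d)
    (q : Fin (n t) × Fin (n (t + 1))) : ℝ :=
  marg p (fun u => (u ⟨t, by omega⟩, u ⟨t + 1, by omega⟩)) q /
    marg p (fun u => u ⟨t + 1, by omega⟩) q.2

variable {p : PreIdx n d → ℝ}

theorem IsMarkov.marg_triple_mul_marg (hp : IsMarkov p) (hd : t + 3 ≤ d) (w : Fin (n t))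
    (x : Fin (n (t + 1))) (y : Fin (n (t + 2))) :
    marg p (fun u => ((u ⟨t, by omega⟩, u ⟨t + 1, by omega⟩), u ⟨t + 2, hd⟩)) ((w, x), y) *
        marg p (fun u => u ⟨t + 1, by omega⟩) x =
      marg p (fun u => (u ⟨t, by omega⟩, u ⟨t + 1, by omega⟩)) (w, x) *
        marg p (fun u => (u ⟨t + 1, by omega⟩, u ⟨t + 2, hd⟩)) (x, y) := by
  have hmarkov : ∀ u, p u * marg p (fun v => v ⟨t + 1, by omega⟩) (u ⟨t + 1, by omega⟩) =
      marg p (windowRestrict 0 (t + 2)) (windowRestrict 0 (t + 2) u) *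
        marg p (windowRestrict (t + 1) d) (windowRestrict (t + 1) d u) := by
    intro u
    have h : p u * winMarg p (t + 1) (t + 2) (windowRestrict _ _ u) =
        winMarg p 0 (t + 2) (windowRestrict _ _ u) * winMarg p (t + 1) d (windowRestrict _ _ u) :=
      hp.2.2 (t + 2) le_add_self (by omega) u
    simp only [winMarg_eq_marg] at h
    rwa [marg_congr p fun v => windowRestrict_succ_eq_iff (by omega : t + 1 < d)] at h
  rw [marg, sum_mul]
  calc _ = ∑ u with ((u ⟨t, by omega⟩, u ⟨t + 1, by omega⟩), u ⟨t + 2, hd⟩) = ((w, x), y),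
        p u * marg p (fun v => v ⟨t + 1, by omega⟩) (u ⟨t + 1, by omega⟩) := by
        refine sum_congr rfl fun u hu => ?_
        simp only [mem_filter, Prod.mk.injEq] at hu
        rw [hu.2.1.2]
    _ = _ := by
        simp only [hmarkov]
        refine sum_marg_mul_marg_eq_of_join p p _ _ _ _ _ (splice (t + 1)) fun a b u => ?_
        rw [windowRestrict_eq_and_windowRestrict_eq_iff_splice (by omega)]
        constructor
        · rintro ⟨hE, rfl, hab⟩
          simp_all [splice]
        · rintro ⟨rfl, hL, hR⟩
          simp_all [splice]

theorem IsMarkov.marg_triple_eq (hp : IsMarkov p) (hd : t + 3 ≤ d)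
    (q : Fin (n t) × Fin (n (t + 1))) (y : Fin (n (t + 2))) :
    marg p (fun u => ((u ⟨t, by omega⟩, u ⟨t + 1, by omega⟩), u ⟨t + 2, hd⟩)) (q, y) =
      condPrev p (by omega) q *
        ∑ a, marg p (fun u => ((u ⟨t, by omega⟩, u ⟨t + 1, by omega⟩), u ⟨t + 2, hd⟩))
          ((a, q.2), y) := by
  obtain ⟨w, x⟩ := q
  rw [condPrev]
  by_cases hx : marg p (fun u => u ⟨t + 1, by omega⟩) x = 0
  · rw [hx, div_zero, zero_mul]
    refine le_antisymm ?_ (marg_nonneg hp.1 _ _)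
    exact hx ▸ marg_le_marg hp.1 fun u hu => by simp_all
  · have hsum : ∑ a, marg p (fun u => ((u ⟨t, by omega⟩, u ⟨t + 1, by omega⟩), u ⟨t + 2, hd⟩))
          ((a, x), y) = marg p (fun u => (u ⟨t + 1, by omega⟩, u ⟨t + 2, hd⟩)) (x, y) := by
      refine mul_right_cancel₀ hx ?_
      rw [sum_mul]
      simp only [hp.marg_triple_mul_marg hd, ← sum_mul, sum_marg_prod_mk]
      exact mul_comm _ _
    rw [hsum, div_mul_eq_mul_div, eq_div_iff hx, hp.marg_triple_mul_marg hd]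

theorem IsMarkov.mem_fiberwiseProportional_of_comp_mem_colSpace (hp : IsMarkov p)
    (hd : t + 3 ≤ d) {u : Fin (n t) × Fin (n (t + 1)) → ℝ}
    (hu : u ∘ windowPairEquiv (by omega) ∈ colSpace (winMatrix p t (t + 2) (t + 3))) :
    u ∈ fiberwiseProportional (condPrev p (by omega)) := by
  set e := windowPairEquiv (n := n) (by omega : t + 2 ≤ d)
  have hcol : ∀ q y, winMatrix p t (t + 2) (t + 3) (e.symm q) y =
      marg p (fun u => ((u ⟨t, by omega⟩, u ⟨t + 1, by omega⟩), u ⟨t + 2, hd⟩))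
        (q, y ⟨⟨t + 2, hd⟩, le_rfl, lt_add_one _⟩) := by
    intro q y
    rw [winMatrix_eq_marg p (by omega : t ≤ t + 2) (by omega : t + 2 ≤ t + 3)]
    refine marg_congr p fun u => ?_
    rw [Prod.mk.injEq, Prod.mk.injEq, windowRestrict_succ_eq_iff hd, ← e.apply_eq_iff_eq,
      Equiv.apply_symm_apply]
    rfl
  have hle : colSpace (winMatrix p t (t + 2) (t + 3)) ≤
      (fiberwiseProportional (condPrev p (by omega))).comap (LinearMap.funLeft ℝ ℝ e.symm) := by
    refine Submodule.span_le.mpr ?_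
    rintro _ ⟨y, rfl⟩ q
    simp only [LinearMap.funLeft_apply, hcol]
    exact hp.marg_triple_eq hd q _
  simpa [Submodule.mem_comap, LinearMap.funLeft, Function.comp_def] using hle hu

end Markov

/-- the coefficient matrix `A_k` has full rank for Markov models.
Let `p` be a discrete Markov model and `2 ≤ k ≤ d - 1` (1-based, here `k = t + 2`) such
that the `k`-th unfolding matrix of `p` has rank `r_k`.  If `B_k` has orthonormal
columns spanning the column space of the triple-marginal matrix
`p((x_{k-1}, x_k); x_{k+1})`, then `A_k(x_k, α_k) = Σ_{x_{k-1}} B_k(x_{k-1}, x_k, α_k)`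
has rank `r_k`. -/
theorem markov_coefficient_matrix_full_rank
    (d : ℕ) (n rk : ℕ → ℕ) (p : PreIdx n d → ℝ) (hp : IsMarkov p)
    (t : ℕ) (hk : t + 2 ≤ d - 1)
    (B : Fin (n t) → Fin (n (t + 1)) → Fin (rk (t + 2)) → ℝ)
    (hBortho :
      (Matrix.of fun (q : Fin (n t) × Fin (n (t + 1))) (α : Fin (rk (t + 2))) =>
          B q.1 q.2 α)ᵀ *
        (Matrix.of fun (q : Fin (n t) × Fin (n (t + 1))) (α : Fin (rk (t + 2))) =>
          B q.1 q.2 α) = 1)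
    (hBspan :
      colSpace (Matrix.of fun (q : MidIdx n d t (t + 2)) (α : Fin (rk (t + 2))) =>
          B (q ⟨⟨t, by omega⟩, ⟨le_rfl, Nat.lt_succ_of_lt (Nat.lt_succ_self _)⟩⟩)
            (q ⟨⟨t + 1, by omega⟩, ⟨Nat.le_succ _, Nat.lt_succ_self _⟩⟩) α) =
        colSpace (winMatrix p t (t + 2) (t + 3))) :
    mrank (Matrix.of fun (x : Fin (n (t + 1))) (α : Fin (rk (t + 2))) =>
        ∑ w : Fin (n t), B w x α) = rk (t + 2) := by
  have hd : t + 3 ≤ d := by omega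
  set Bq := Matrix.of fun (q : Fin (n t) × Fin (n (t + 1))) (α : Fin (rk (t + 2))) => B q.1 q.2 α
  rw [mrank_eq_card_of_mulVec_eq_zero _ fun v hv => ?_, Fintype.card_fin]
  have hcol : (Bq *ᵥ v) ∘ windowPairEquiv (by omega) ∈ colSpace (winMatrix p t (t + 2) (t + 3)) :=
    hBspan ▸ mulVec_mem_colSpace _ v
  have hzero : Bq *ᵥ v = 0 :=
    eq_zero_of_mem_fiberwiseProportional (hp.mem_fiberwiseProportional_of_comp_mem_colSpace hd hcol)
      fun x => calc
        ∑ w, (Bq *ᵥ v) (w, x) = ((of fun x α => ∑ w, B w x α) *ᵥ v) x := by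
          simp only [mulVec, dotProduct, Bq, of_apply, sum_mul]
          exact sum_comm
        _ = 0 := congrFun hv x
  calc v = (Bqᵀ * Bq) *ᵥ v := by rw [hBortho, one_mulVec]
    _ = 0 := by rw [← mulVec_mulVec, hzero, mulVec_zero]
end
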